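/- arXiv:math/0503730 — 10 statements merged into one kernel-verified Lean document; each statement's English description precedes it below -/
import Mathlib

section
/- The number of Castelnuovo functions of weight n equals the number of partitions of n into distinct parts. -/
/-- A Castelnuovo function `s : ℕ → ℕ`: finitely supported,
`s 0 = 1, s 1 = 2, …, s (σ-1) = σ` and `s (σ-1) ≥ s σ ≥ s (σ+1) ≥ ⋯ ≥ 0`. -/
def IsCastelnuovoFun (s : ℕ → ℕ) : Prop :=
  (Function.support s).Finite ∧
  ∃ σ : ℕ, (∀ i : ℕ, i < σ → s i = i + 1) ∧ (s σ : ℤ) ≤ (σ : ℤ) ∧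
    ∀ i : ℕ, σ ≤ i → s (i + 1) ≤ s i

namespace CastelnuovoAux

/-- Characterization of Castelnuovo functions. -/
theorem isCastelnuovo_iff (s : ℕ → ℕ) :
    IsCastelnuovoFun s ↔ (Function.support s).Finite ∧ (∀ i, s i ≤ i + 1) ∧
      (∀ i, s i = i + 1 ∨ s (i + 1) ≤ s i) := by
  constructor
  · rintro ⟨hfin, σ, h1, h2, h3⟩
    have h2' : s σ ≤ σ := by exact_mod_cast h2
    have hσ : ∀ i, σ ≤ i → s i ≤ σ := by
      intro i hi
      induction i, hi using Nat.le_induction with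
      | base => exact h2'
      | succ i hi ih => exact (h3 i hi).trans ih
    refine ⟨hfin, ?_, ?_⟩
    · intro i
      rcases lt_or_ge i σ with h | h
      · exact (h1 i h).le
      · exact (hσ i h).trans (by omega)
    · intro i
      rcases lt_or_ge i σ with h | h
      · exact Or.inl (h1 i h)
      · exact Or.inr (h3 i h)
  · rintro ⟨hfin, hb, hd⟩
    have hex : ∃ i, s i ≤ i := by
      obtain ⟨N, hN⟩ := hfin.bddAbove
      refine ⟨N + 1, ?_⟩
      by_contra h
      have : N + 1 ∈ Function.support s := by
        simp only [Function.mem_support]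
        omega
      exact absurd (hN this) (by omega)
    classical
    set σ := Nat.find hex with hσdef
    have hspec : s σ ≤ σ := Nat.find_spec hex
    have hkey : ∀ i, σ ≤ i → s i ≤ i := by
      intro i hi
      induction i, hi using Nat.le_induction with
      | base => exact hspec
      | succ i hi ih =>
        rcases hd i with h | h
        · omega
        · omega
    refine ⟨hfin, σ, ?_, by exact_mod_cast hspec, ?_⟩
    · intro i hi
      have := Nat.find_min hex hi
      have := hb i
      omega
    · intro i hi
      rcases hd i with h | h
      · have := hkey i hi; omega
      · exact h

section Castelnuovo

variable {s : ℕ → ℕ}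

/-- downward closure of rows. -/
theorem row_closed (hs : IsCastelnuovoFun s) {j i i' : ℕ} (h1 : j ≤ i') (h2 : i' ≤ i)
    (h3 : j + 1 ≤ s i) : j + 1 ≤ s i' := by
  obtain ⟨-, hb, hd⟩ := (isCastelnuovo_iff s).1 hs
  induction i, h2 using Nat.le_induction with
  | base => exact h3
  | succ i hi ih =>
    rcases hd i with h | h
    · exact ih (by omega)
    · exact ih (by omega)

theorem row_finite (hs : IsCastelnuovoFun s) (j : ℕ) : {i | j + 1 ≤ s i}.Finite := by
  apply hs.1.subset
  intro i hi
  simp only [Set.mem_setOf_eq] at hi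
  simp only [Function.mem_support]
  omega

/-- row counts -/
noncomputable def R (s : ℕ → ℕ) (j : ℕ) : ℕ := Set.ncard {i | j ≤ s i}

theorem ncard_Icc' (a b : ℕ) : (Set.Icc a b).ncard = b + 1 - a := by
  rw [← Finset.coe_Icc, Set.ncard_coe_finset, Nat.card_Icc]

theorem ncard_Ico' (a b : ℕ) : (Set.Ico a b).ncard = b - a := by
  rw [← Finset.coe_Ico, Set.ncard_coe_finset, Nat.card_Ico]

theorem mem_row_iff (hs : IsCastelnuovoFun s) (j i : ℕ) :
    j + 1 ≤ s i ↔ j ≤ i ∧ i < j + R s (j + 1) := by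
  obtain ⟨-, hb, -⟩ := (isCastelnuovo_iff s).1 hs
  constructor
  · intro h
    have hj : j ≤ i := by have := hb i; omega
    have hsub : Set.Icc j i ⊆ {i' | j + 1 ≤ s i'} := fun m hm =>
      row_closed hs hm.1 hm.2 h
    have hle : (Set.Icc j i).ncard ≤ R s (j + 1) :=
      Set.ncard_le_ncard hsub (row_finite hs j)
    rw [ncard_Icc'] at hle
    exact ⟨hj, by omega⟩
  · rintro ⟨hj, hlt⟩
    by_contra hnot
    have hsub : {i' | j + 1 ≤ s i'} ⊆ Set.Ico j i := by
      intro m hm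
      simp only [Set.mem_setOf_eq] at hm
      have hjm : j ≤ m := by have := hb m; omega
      refine ⟨hjm, ?_⟩
      by_contra h'
      exact hnot (row_closed hs hj (by omega) hm)
    have hle : R s (j + 1) ≤ (Set.Ico j i).ncard :=
      Set.ncard_le_ncard hsub (Set.finite_Ico j i)
    rw [ncard_Ico'] at hle
    omega

theorem R_anti (hs : IsCastelnuovoFun s) {j j' : ℕ} (h : j ≤ j') :
    R s (j' + 1) ≤ R s (j + 1) :=
  Set.ncard_le_ncard (fun i hi => by simp only [Set.mem_setOf_eq] at *; omega)
    (row_finite hs j)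

theorem R_strict (hs : IsCastelnuovoFun s) {j : ℕ} (h : 0 < R s (j + 2)) :
    R s (j + 2) < R s (j + 1) := by
  obtain ⟨-, hb, -⟩ := (isCastelnuovo_iff s).1 hs
  have hne : {i | (j + 1) + 1 ≤ s i}.Nonempty := by
    rw [← Set.ncard_pos (row_finite hs (j + 1))]
    exact h
  obtain ⟨i, hi⟩ := hne
  simp only [Set.mem_setOf_eq] at hi
  have hji : j ≤ i := by have := hb i; omega
  have hsj : j + 1 ≤ s j := row_closed hs le_rfl hji (by omega)
  have hsj' : s j = j + 1 := by have := hb j; omega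
  have hss : {i | (j + 1) + 1 ≤ s i} ⊂ {i | j + 1 ≤ s i} := by
    constructor
    · intro m hm; simp only [Set.mem_setOf_eq] at *; omega
    · intro hsub
      have := hsub (show j ∈ {i | j + 1 ≤ s i} by simp [hsj'])
      simp only [Set.mem_setOf_eq, hsj'] at this
      omega
  exact Set.ncard_lt_ncard hss (row_finite hs j)

theorem R_strictAnti (hs : IsCastelnuovoFun s) {m j : ℕ} (hmj : m < j)
    (h : 0 < R s (j + 1)) : R s (j + 1) < R s (m + 1) := by
  induction j, hmj using Nat.le_induction with
  | base => exact R_strict hs h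
  | succ j hj ih =>
    have h1 : R s (j + 2) < R s (j + 1) := R_strict hs h
    exact h1.trans (ih (by omega))

theorem lt_R_one (hs : IsCastelnuovoFun s) {j : ℕ} (h : 0 < R s (j + 1)) :
    j < R s 1 := by
  obtain ⟨-, hb, -⟩ := (isCastelnuovo_iff s).1 hs
  have hne : {i | j + 1 ≤ s i}.Nonempty := by
    rw [← Set.ncard_pos (row_finite hs j)]; exact h
  obtain ⟨i, hi⟩ := hne
  simp only [Set.mem_setOf_eq] at hi
  have hji : j ≤ i := by have := hb i; omega
  have hsub : Set.Icc 0 i ⊆ {i' | 0 + 1 ≤ s i'} := fun m hm =>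
    row_closed hs (Nat.zero_le m) hm.2 (by omega)
  have hle : (Set.Icc 0 i).ncard ≤ R s 1 :=
    Set.ncard_le_ncard hsub (row_finite hs 0)
  rw [ncard_Icc'] at hle
  omega

end Castelnuovo

/-! ### Ranks in a finset and the map from finsets to functions -/

/-- rank of `a` in `A`: number of elements of `A` greater than `a`. -/
def rk (A : Finset ℕ) (a : ℕ) : ℕ := (A.filter (fun b => a < b)).card

/-- the Castelnuovo function associated to a finset of distinct parts. -/
def Phi (A : Finset ℕ) (i : ℕ) : ℕ :=
  (A.filter (fun a => rk A a ≤ i ∧ i < rk A a + a)).card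

theorem rk_lt_rk {A : Finset ℕ} {a b : ℕ} (hb : b ∈ A) (hab : a < b) :
    rk A b < rk A a := by
  apply Finset.card_lt_card
  constructor
  · intro c hc
    simp only [Finset.mem_filter] at *
    exact ⟨hc.1, by omega⟩
  · intro hsub
    have := hsub (by simp only [Finset.mem_filter]; exact ⟨hb, hab⟩)
    simp only [Finset.mem_filter] at this
    omega

theorem rk_le_rk {A : Finset ℕ} {a b : ℕ} (hb : b ∈ A) (hab : a ≤ b) :
    rk A b ≤ rk A a := by
  rcases eq_or_lt_of_le hab with rfl | h
  · exact le_rfl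
  · exact (rk_lt_rk hb h).le

theorem rk_add_le {A : Finset ℕ} {a b : ℕ} (hab : a ≤ b) :
    rk A a + a ≤ rk A b + b := by
  have hsplit : A.filter (fun c => a < c) ⊆
      A.filter (fun c => b < c) ∪ A.filter (fun c => a < c ∧ c ≤ b) := by
    intro c hc
    simp only [Finset.mem_filter, Finset.mem_union] at hc ⊢
    obtain ⟨hcA, hac⟩ := hc
    rcases le_or_gt c b with h | h
    · exact Or.inr ⟨hcA, hac, h⟩
    · exact Or.inl ⟨hcA, h⟩
  have h1 : (A.filter (fun c => a < c ∧ c ≤ b)).card ≤ (Finset.Ioc a b).card := by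
    apply Finset.card_le_card
    intro c hc
    simp only [Finset.mem_filter] at hc
    exact Finset.mem_Ioc.2 hc.2
  rw [Nat.card_Ioc] at h1
  have h2 : rk A a ≤ rk A b + (A.filter (fun c => a < c ∧ c ≤ b)).card :=
    (Finset.card_le_card hsplit).trans (Finset.card_union_le _ _)
  omega

theorem rk_lt_card {A : Finset ℕ} {a : ℕ} (ha : a ∈ A) : rk A a < A.card := by
  apply Finset.card_lt_card
  constructor
  · exact Finset.filter_subset _ _
  · intro hsub
    have := hsub ha
    simp only [Finset.mem_filter] at this
    omega

theorem rk_injOn {A : Finset ℕ} {a b : ℕ} (ha : a ∈ A) (hb : b ∈ A)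
    (h : rk A a = rk A b) : a = b := by
  rcases lt_trichotomy a b with h' | h' | h'
  · have := rk_lt_rk hb h'; omega
  · exact h'
  · have := rk_lt_rk ha h'; omega

theorem exists_rk_eq {A : Finset ℕ} {j : ℕ} (hj : j < A.card) :
    ∃ a ∈ A, rk A a = j := by
  have := Finset.surj_on_of_inj_on_of_card_le (s := A) (t := Finset.range A.card)
    (fun a _ => rk A a) (fun a ha => Finset.mem_range.2 (rk_lt_card ha))
    (fun a b ha hb h => rk_injOn ha hb h) (by simp)
  obtain ⟨a, ha, heq⟩ := this j (Finset.mem_range.2 hj)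
  exact ⟨a, ha, heq.symm⟩

section PhiLemmas

variable {A : Finset ℕ} (hA : ∀ a ∈ A, 0 < a)

theorem Phi_le (i : ℕ) : Phi A i ≤ i + 1 := by
  have : (A.filter (fun a => rk A a ≤ i ∧ i < rk A a + a)).card ≤
      (Finset.range (i + 1)).card := by
    apply Finset.card_le_card_of_injOn (rk A)
    · intro a ha
      simp only [Finset.mem_coe, Finset.mem_filter] at ha
      exact Finset.mem_range.2 (by omega)
    · intro a ha b hb h
      simp only [Finset.coe_filter, Set.mem_setOf_eq] at ha hb
      exact rk_injOn ha.1 hb.1 h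
  simpa [Phi] using this

include hA in
theorem Phi_cond (i : ℕ) : Phi A i = i + 1 ∨ Phi A (i + 1) ≤ Phi A i := by
  by_cases h : ∃ a ∈ A, rk A a = i + 1
  · left
    obtain ⟨a₀, ha₀, hrk⟩ := h
    have hsub : A.filter (fun b => a₀ < b) ⊆
        A.filter (fun a => rk A a ≤ i ∧ i < rk A a + a) := by
      intro b hb
      simp only [Finset.mem_filter] at *
      obtain ⟨hbA, hab⟩ := hb
      have h1 : rk A b < rk A a₀ := rk_lt_rk hbA hab
      have h2 : rk A a₀ + a₀ ≤ rk A b + b := rk_add_le hab.le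
      have := hA a₀ ha₀
      exact ⟨hbA, by omega, by omega⟩
    have h1 : i + 1 ≤ Phi A i := by
      have := Finset.card_le_card hsub
      unfold Phi
      unfold rk at hrk
      omega
    have := Phi_le (A := A) i
    omega
  · right
    apply Finset.card_le_card
    intro a ha
    simp only [Finset.mem_filter] at *
    obtain ⟨haA, hle, hlt⟩ := ha
    have : rk A a ≠ i + 1 := fun hc => h ⟨a, haA, hc⟩
    exact ⟨haA, by omega, by omega⟩

theorem Phi_eq_zero {i : ℕ} (hi : A.card + A.sum id ≤ i) : Phi A i = 0 := by
  unfold Phi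
  rw [Finset.card_eq_zero, Finset.filter_eq_empty_iff]
  intro a ha
  have h1 : rk A a ≤ A.card := Finset.card_filter_le _ _
  have h2 : a ≤ A.sum id := Finset.single_le_sum (f := id) (fun _ _ => Nat.zero_le _) ha
  omega

theorem support_Phi :
    Function.support (Phi A) ⊆ ↑(Finset.range (A.card + A.sum id)) := by
  intro i hi
  simp only [Finset.coe_range, Set.mem_Iio]
  by_contra h
  exact hi (Phi_eq_zero (by omega))

include hA in
theorem Phi_castelnuovo : IsCastelnuovoFun (Phi A) :=
  (isCastelnuovo_iff _).2 ⟨(Finset.finite_toSet _).subset support_Phi, Phi_le, Phi_cond hA⟩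

theorem Phi_finsum : ∑ᶠ i, Phi A i = A.sum id := by
  rw [finsum_eq_sum_of_support_subset _ support_Phi]
  set M := A.card + A.sum id with hM
  unfold Phi
  have hcf : ∀ i, (A.filter (fun a => rk A a ≤ i ∧ i < rk A a + a)).card =
      ∑ a ∈ A, if rk A a ≤ i ∧ i < rk A a + a then 1 else 0 := fun i =>
    Finset.card_filter _ _
  simp only [hcf]
  rw [Finset.sum_comm]
  have : ∀ a ∈ A, (∑ i ∈ Finset.range M, if rk A a ≤ i ∧ i < rk A a + a then 1 else 0) = a := by
    intro a ha
    rw [← Finset.card_filter]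
    have heq : (Finset.range M).filter (fun i => rk A a ≤ i ∧ i < rk A a + a) =
        Finset.Ico (rk A a) (rk A a + a) := by
      ext i
      simp only [Finset.mem_filter, Finset.mem_range, Finset.mem_Ico]
      have h1 : rk A a ≤ A.card := Finset.card_filter_le _ _
      have h2 : a ≤ A.sum id := Finset.single_le_sum (f := id) (fun _ _ => Nat.zero_le _) ha
      omega
    rw [heq, Nat.card_Ico]
    omega
  rw [Finset.sum_congr rfl this]
  rfl

end PhiLemmas

/-! ### The map from functions to finsets -/

/-- the finset of row lengths of `s`. -/
noncomputable def Fs (s : ℕ → ℕ) : Finset ℕ :=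
  ((Finset.range (R s 1)).filter (fun j => 0 < R s (j + 1))).image (fun j => R s (j + 1))

theorem Fs_pos {s : ℕ → ℕ} {r : ℕ} (hr : r ∈ Fs s) : 0 < r := by
  simp only [Fs, Finset.mem_image, Finset.mem_filter, Finset.mem_range] at hr
  obtain ⟨j, ⟨-, hj⟩, rfl⟩ := hr
  exact hj

section RoundTrips

variable {A : Finset ℕ}

theorem R_Phi_rk (hA : ∀ a ∈ A, 0 < a) {a : ℕ} (ha : a ∈ A) :
    R (Phi A) (rk A a + 1) = a := by
  set t := Phi A with ht
  have htc : IsCastelnuovoFun t := Phi_castelnuovo hA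
  set j := rk A a with hj
  have hfil : (A.filter (fun b => a ≤ b)).card = j + 1 := by
    have : A.filter (fun b => a ≤ b) = insert a (A.filter (fun b => a < b)) := by
      ext c
      simp only [Finset.mem_filter, Finset.mem_insert]
      constructor
      · rintro ⟨hc, hac⟩
        rcases eq_or_lt_of_le hac with rfl | h
        · exact Or.inl rfl
        · exact Or.inr ⟨hc, h⟩
      · rintro (rfl | ⟨hc, hac⟩)
        · exact ⟨ha, le_rfl⟩
        · exact ⟨hc, hac.le⟩
    rw [this, Finset.card_insert_of_notMem (by simp)]
    rw [hj]
    rfl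
  -- (i) : for j ≤ i < j + a, t i ≥ j + 1
  have hcov : ∀ i, j ≤ i → i < j + a → j + 1 ≤ t i := by
    intro i h1 h2
    have hsub : A.filter (fun b => a ≤ b) ⊆
        A.filter (fun b => rk A b ≤ i ∧ i < rk A b + b) := by
      intro b hb
      simp only [Finset.mem_filter] at *
      obtain ⟨hbA, hab⟩ := hb
      have hr1 : rk A b ≤ j := rk_le_rk hbA hab
      have hr2 : rk A a + a ≤ rk A b + b := rk_add_le hab
      exact ⟨hbA, by omega, by omega⟩
    have := Finset.card_le_card hsub
    rw [hfil] at this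
    exact this
  -- (ii) : t (j + a) ≤ j
  have hend : t (j + a) ≤ j := by
    have hsub : A.filter (fun b => rk A b ≤ j + a ∧ j + a < rk A b + b) ⊆
        A.filter (fun b => a < b) := by
      intro b hb
      simp only [Finset.mem_filter] at *
      obtain ⟨hbA, -, h2⟩ := hb
      refine ⟨hbA, ?_⟩
      by_contra hc
      have := rk_add_le (A := A) (show b ≤ a by omega)
      omega
    have h5 : t (j + a) ≤ rk A a := Finset.card_le_card hsub
    omega
  have hpos : 0 < a := hA a ha
  have h1 : j + 1 ≤ t (j + a - 1) := hcov _ (by omega) (by omega)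
  have h2 := (mem_row_iff htc j (j + a - 1)).1 h1
  have h3 : ¬ (j ≤ j + a ∧ j + a < j + R t (j + 1)) := by
    intro hc
    have := (mem_row_iff htc j (j + a)).2 hc
    omega
  omega

theorem R_Phi_zero {j : ℕ} (hj : A.card ≤ j) : R (Phi A) (j + 1) = 0 := by
  have : {i | j + 1 ≤ Phi A i} = ∅ := by
    ext i
    simp only [Set.mem_setOf_eq, Set.mem_empty_iff_false, iff_false, not_le]
    have : Phi A i ≤ A.card := Finset.card_filter_le _ _
    omega
  rw [R, this, Set.ncard_empty]

theorem F_Phi (hA : ∀ a ∈ A, 0 < a) : Fs (Phi A) = A := by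
  set t := Phi A with ht
  have htc : IsCastelnuovoFun t := Phi_castelnuovo hA
  ext r
  simp only [Fs, Finset.mem_image, Finset.mem_filter, Finset.mem_range]
  constructor
  · rintro ⟨j, ⟨hj1, hj2⟩, rfl⟩
    by_cases hc : j < A.card
    · obtain ⟨a, haA, hrk⟩ := exists_rk_eq hc
      rw [← hrk, R_Phi_rk hA haA]
      exact haA
    · rw [R_Phi_zero (by omega)] at hj2
      omega
  · intro hr
    refine ⟨rk A r, ⟨?_, ?_⟩, R_Phi_rk hA hr⟩
    · exact lt_R_one htc (by rw [R_Phi_rk hA hr]; exact hA r hr)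
    · rw [R_Phi_rk hA hr]; exact hA r hr

theorem Phi_F {s : ℕ → ℕ} (hs : IsCastelnuovoFun s) : Phi (Fs s) = s := by
  classical
  funext i
  set D := (Finset.range (R s 1)).filter (fun j => 0 < R s (j + 1)) with hD
  set g := fun j => R s (j + 1) with hg
  have hFs : Fs s = D.image g := rfl
  have hmemD : ∀ {m : ℕ}, 0 < R s (m + 1) → m ∈ D := by
    intro m hm
    simp only [hD, Finset.mem_filter, Finset.mem_range]
    exact ⟨lt_R_one hs hm, hm⟩
  have hDpos : ∀ m ∈ D, 0 < g m := by
    intro m hm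
    simp only [hD, Finset.mem_filter] at hm
    exact hm.2
  have hinj : Set.InjOn g ↑D := by
    intro m hm j hj hmj
    simp only [hD, Finset.coe_filter, Set.mem_setOf_eq, Finset.mem_range] at hm hj
    by_contra hne
    rcases lt_or_gt_of_ne hne with h | h
    · have := R_strictAnti hs h hj.2; simp only [hg] at hmj; omega
    · have := R_strictAnti hs h hm.2; simp only [hg] at hmj; omega
  -- rank computation
  have hrk : ∀ j ∈ D, rk (Fs s) (g j) = j := by
    intro j hjD
    have hj : 0 < R s (j + 1) := hDpos j hjD
    have himg : (D.image g).filter (fun b => g j < b) =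
        (D.filter (fun m => g j < g m)).image g := Finset.filter_image
    have hfil : D.filter (fun m => g j < g m) = Finset.range j := by
      ext m
      simp only [Finset.mem_filter, Finset.mem_range]
      constructor
      · rintro ⟨hmD, hgm⟩
        by_contra hc
        have hle : j ≤ m := by omega
        have := R_anti hs hle
        simp only [hg] at hgm
        omega
      · intro hmj
        have h1 : g j < g m := R_strictAnti hs hmj hj
        exact ⟨hmemD (lt_of_lt_of_le hj h1.le), h1⟩
    rw [rk, hFs, himg,
      Finset.card_image_of_injOn (hinj.mono (Finset.coe_subset.2 (Finset.filter_subset _ _))),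
      hfil, Finset.card_range]
  have himg : (Fs s).filter (fun a => rk (Fs s) a ≤ i ∧ i < rk (Fs s) a + a) =
      (D.filter (fun m => rk (Fs s) (g m) ≤ i ∧ i < rk (Fs s) (g m) + g m)).image g := by
    rw [hFs, Finset.filter_image]
  have hfin : D.filter (fun m => rk (Fs s) (g m) ≤ i ∧ i < rk (Fs s) (g m) + g m) =
      Finset.range (s i) := by
    ext m
    simp only [Finset.mem_filter, Finset.mem_range]
    constructor
    · rintro ⟨hmD, h1, h2⟩
      rw [hrk m hmD] at h1 h2
      have := (mem_row_iff hs m i).2 ⟨h1, by simpa [hg] using h2⟩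
      omega
    · intro hm
      have hpos : 0 < R s (m + 1) := by
        rw [R, Set.ncard_pos (row_finite hs m)]
        exact ⟨i, by simpa using hm⟩
      have hmD := hmemD hpos
      have h2 := (mem_row_iff hs m i).1 (by omega)
      rw [hrk m hmD]
      exact ⟨hmD, h2.1, by simpa [hg] using h2.2⟩
  rw [Phi, himg,
    Finset.card_image_of_injOn (hinj.mono (Finset.coe_subset.2 (Finset.filter_subset _ _))),
    hfin, Finset.card_range]

end RoundTrips

/-- The equivalence between Castelnuovo functions of weight `n` and finsets of
positive naturals with sum `n`. -/
noncomputable def equivST (n : ℕ) :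
    {s : ℕ → ℕ | IsCastelnuovoFun s ∧ ∑ᶠ i : ℕ, s i = n} ≃
      {A : Finset ℕ | (∀ a ∈ A, 0 < a) ∧ A.sum id = n} where
  toFun x := ⟨Fs x.1, fun _ hr => Fs_pos hr, by
    have hs := x.2.1
    have hA : ∀ a ∈ Fs x.1, 0 < a := fun _ hr => Fs_pos hr
    have := Phi_finsum (A := Fs x.1)
    rw [Phi_F hs] at this
    rw [← this]
    exact x.2.2⟩
  invFun y := ⟨Phi y.1, Phi_castelnuovo y.2.1, by rw [Phi_finsum]; exact y.2.2⟩
  left_inv x := Subtype.ext (Phi_F x.2.1)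
  right_inv y := Subtype.ext (F_Phi y.2.1)

/-- The equivalence between such finsets and distinct partitions. -/
noncomputable def equivTD (n : ℕ) :
    {A : Finset ℕ | (∀ a ∈ A, 0 < a) ∧ A.sum id = n} ≃
      {p : n.Partition // p ∈ Nat.Partition.distincts n} where
  toFun x := ⟨⟨x.1.1, fun h => x.2.1 _ h, by
      have := x.2.2
      rwa [Finset.sum, Multiset.map_id] at this⟩, by
    simp only [Nat.Partition.distincts, Finset.mem_filter, Finset.mem_univ, true_and]
    exact x.1.2⟩
  invFun y := ⟨⟨y.1.parts, by
      have := y.2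
      simp only [Nat.Partition.distincts, Finset.mem_filter] at this
      exact this.2⟩, fun a ha => y.1.parts_pos ha, by
    have := y.1.parts_sum
    rwa [Finset.sum, Multiset.map_id]⟩
  left_inv x := Subtype.ext rfl
  right_inv y := Subtype.ext rfl

end CastelnuovoAux

/-- the number of Castelnuovo functions of weight `n` equals the
number of partitions of `n` into distinct parts. -/
theorem card_castelnuovo_eq_card_distinct_partitions (n : ℕ) :
    {s : ℕ → ℕ | IsCastelnuovoFun s ∧ ∑ᶠ i : ℕ, s i = n}.ncard =
      (Nat.Partition.distincts n).card := by
  have e := (CastelnuovoAux.equivST n).trans (CastelnuovoAux.equivTD n)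
  calc {s : ℕ → ℕ | IsCastelnuovoFun s ∧ ∑ᶠ i : ℕ, s i = n}.ncard
      = Nat.card {s : ℕ → ℕ | IsCastelnuovoFun s ∧ ∑ᶠ i : ℕ, s i = n} :=
        (Nat.card_coe_set_eq _).symm
    _ = Nat.card {p : n.Partition // p ∈ Nat.Partition.distincts n} := Nat.card_congr e
    _ = (Nat.Partition.distincts n).card := Nat.card_eq_finsetCard _
end

section
/- Let q(t) be an integer Laurent polynomial. There exists a finitely supported sequence (a_i) of nonnegative integers satisfying the conditions of Theorem C (a_l = 0 for l < σ; a_σ = q_σ > 0 where q_σ t^σ is the lowest nonzero term of q; and max(q_l, 0) ≤ a_l < ∑_{i≤l} q_i for l > σ) if and only if there exists σ ∈ ℤ with ∑_{i≤l} q_i > 0 for all l ≥ σ and ∑_{i≤l} q_i = 0 for l < σ. -/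
/-! Write `S l = ∑_{i ≤ l} q i`. Since `q` vanishes below `σ`, `S l = 0` for `l < σ` and
`S σ = q σ ≠ 0`, so the threshold `τ` can only be `σ`, and `a l < S l` with `a ≥ 0` forces
positivity. Conversely `a l = max (q l) 0` works: `S l = S (l - 1) + q l > q l` as soon as
`S (l - 1) > 0`. -/

section PartialSum

variable {M : Type*} [AddCommMonoid M] (q : ℤ → M)

noncomputable def partialSum (l : ℤ) : M := ∑ᶠ i : ℤ, (if i ≤ l then q i else 0)

theorem partialSum_eq_zero_of_lt {σ l : ℤ} (hmin : ∀ i : ℤ, i < σ → q i = 0) (hl : l < σ) :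
    partialSum q l = 0 :=
  finsum_eq_zero_of_forall_eq_zero fun i => by
    split_ifs with hi
    · exact hmin i (hi.trans_lt hl)
    · rfl

theorem partialSum_eq_partialSum_sub_one_add (hq : (Function.support q).Finite) (l : ℤ) :
    partialSum q l = partialSum q (l - 1) + q l := by
  have hsplit : (fun i : ℤ => if i ≤ l then q i else 0) =
      fun i => (if i ≤ l - 1 then q i else 0) + if i = l then q i else 0 := by
    funext i
    rcases lt_trichotomy i l with h | rfl | h
    · simp [h.le, h.ne, Int.le_sub_one_of_lt h]
    · simp
    · simp [h.not_ge, h.ne', show ¬i ≤ l - 1 by omega]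
  have hfin : ∀ p : ℤ → Prop, [DecidablePred p] →
      (Function.support fun i => if p i then q i else 0).Finite := fun p _ =>
    hq.subset fun i hi h => hi (by simp [h])
  rw [partialSum, hsplit, finsum_add_distrib (hfin _) (hfin _),
    finsum_eq_single _ l fun i hi => if_neg hi, if_pos rfl]
  rfl

theorem partialSum_of_forall_lt_eq_zero (hq : (Function.support q).Finite) {σ : ℤ}
    (hmin : ∀ i : ℤ, i < σ → q i = 0) : partialSum q σ = q σ := by
  rw [partialSum_eq_partialSum_sub_one_add q hq,
    partialSum_eq_zero_of_lt q hmin (sub_one_lt σ), zero_add]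

end PartialSum

section IntPartialSum

variable (q : ℤ → ℤ) (hq : (Function.support q).Finite)
include hq

theorem eq_of_partialSum_pos_of_partialSum_eq_zero {σ τ : ℤ} (hσ : q σ ≠ 0)
    (hmin : ∀ i : ℤ, i < σ → q i = 0) (hpos : ∀ l : ℤ, τ ≤ l → 0 < partialSum q l)
    (hzero : ∀ l : ℤ, l < τ → partialSum q l = 0) : τ = σ := by
  rcases lt_trichotomy τ σ with h | h | h
  · have := hpos (σ - 1) (by omega)
    rw [partialSum_eq_zero_of_lt q hmin (sub_one_lt σ)] at this
    exact absurd this (lt_irrefl 0)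
  · exact h
  · exact absurd (partialSum_of_forall_lt_eq_zero q hq hmin ▸ hzero σ h) hσ

theorem max_lt_partialSum {l : ℤ} (hprev : 0 < partialSum q (l - 1))
    (hl : 0 < partialSum q l) : max (q l) 0 < partialSum q l := by
  have := partialSum_eq_partialSum_sub_one_add q hq l
  exact max_lt (by omega) hl

end IntPartialSum

/-- complement to Theorem C / Corollary 1.5: for a nonzero integer
Laurent polynomial `q` with lowest nonzero term `q σ · t^σ`, there is a finitely
supported sequence `(a i)` of nonnegative integers with `a l = 0` for `l < σ`,
`a σ = q σ > 0` and `max (q l) 0 ≤ a l < ∑_{i ≤ l} q i` for `l > σ`, if and only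
if for some `τ` the partial sums `∑_{i ≤ l} q i` are `> 0` for `l ≥ τ` and `= 0`
for `l < τ`. -/
theorem theoremC_betti_exists_iff_partial_sums_positive
    (q : ℤ → ℤ) (hqfin : (Function.support q).Finite)
    (σ : ℤ) (hσ : q σ ≠ 0) (hσmin : ∀ i : ℤ, i < σ → q i = 0) :
    (∃ a : ℤ → ℤ, (Function.support a).Finite ∧ (∀ i : ℤ, 0 ≤ a i) ∧
        (∀ l : ℤ, l < σ → a l = 0) ∧ a σ = q σ ∧ 0 < q σ ∧
        ∀ l : ℤ, σ < l →
          max (q l) 0 ≤ a l ∧ a l < ∑ᶠ i : ℤ, (if i ≤ l then q i else 0)) ↔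
      (∃ τ : ℤ, (∀ l : ℤ, τ ≤ l → 0 < ∑ᶠ i : ℤ, (if i ≤ l then q i else 0)) ∧
        ∀ l : ℤ, l < τ → ∑ᶠ i : ℤ, (if i ≤ l then q i else 0) = 0) := by
  have hSσ : partialSum q σ = q σ := partialSum_of_forall_lt_eq_zero q hqfin hσmin
  constructor
  · rintro ⟨a, -, ha_nonneg, -, -, hqσ, ha⟩
    refine ⟨σ, fun l hl => ?_, fun l hl => partialSum_eq_zero_of_lt q hσmin hl⟩
    rcases hl.eq_or_lt with rfl | hl
    · exact hqσ.trans_eq hSσ.symm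
    · exact (ha_nonneg l).trans_lt (ha l hl).2
  · rintro ⟨τ, hpos, hzero⟩
    obtain rfl := eq_of_partialSum_pos_of_partialSum_eq_zero q hqfin hσ hσmin hpos hzero
    have hqσ : 0 < q τ := hSσ ▸ hpos τ le_rfl
    refine ⟨fun l => max (q l) 0, hqfin.subset fun i hi h => hi (by simp [h]),
      fun i => le_max_right _ _, fun l hl => by simp [hσmin l hl], max_eq_left hqσ.le, hqσ,
      fun l hl => ⟨le_rfl, max_lt_partialSum q hqfin (hpos (l - 1) (by omega)) (hpos l hl.le)⟩⟩
end

section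
/- Let (a_i), (b_i) be finitely supported sequences of integers, q_i = a_i - b_i, and suppose q is not identically zero with lowest nonzero term q_σ t^σ. Then the following two sets of conditions are equivalent: (1) a_l = 0 for l < σ; a_σ = q_σ > 0; and max(q_l, 0) ≤ a_l < ∑_{i≤l} q_i for l > σ. (2) all a_i, b_i are nonnegative; letting τ be the lowest index with a_τ ≠ 0, b_i = 0 for i ≤ τ; and ∑_{i≤l} b_i < ∑_{i<l} a_i for l > τ. -/
/-!
Since `∑_{i ≤ l} q_i = ∑_{i < l} a_i + a_l - ∑_{i ≤ l} b_i`, the bound `a_l < ∑_{i ≤ l} q_i` of (1)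
is the inequality of (2), and `q_l ≤ a_l` is `0 ≤ b_l`. The remaining conditions match once one
sees that the index `τ` of (2) is `σ`: below `τ` both `a` and `b` vanish, and `q_τ = a_τ ≠ 0`.
-/

open Function Set

variable {ι M : Type*}

theorem Function.HasFiniteSupport.ite [Zero M] {f : ι → M} (hf : HasFiniteSupport f)
    (p : ι → Prop) [DecidablePred p] : HasFiniteSupport fun i => if p i then f i else 0 :=
  hf.subset fun i => by simp only [mem_support]; split_ifs <;> simp

theorem finsum_ite_sub [AddCommGroup M] {f g : ι → M} (hf : HasFiniteSupport f)
    (hg : HasFiniteSupport g) (p : ι → Prop) [DecidablePred p] :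
    ∑ᶠ i, (if p i then f i - g i else 0) =
      (∑ᶠ i, if p i then f i else 0) - ∑ᶠ i, if p i then g i else 0 := by
  rw [← finsum_sub_distrib (hf.ite p) (hg.ite p)]
  simp only [ite_sub_ite, sub_zero]

theorem finsum_ite_le_eq_add [LinearOrder ι] [AddCommMonoid M] {f : ι → M}
    (hf : HasFiniteSupport f) (l : ι) :
    ∑ᶠ i, (if i ≤ l then f i else 0) = (∑ᶠ i, if i < l then f i else 0) + f l := by
  calc ∑ᶠ i, (if i ≤ l then f i else 0)
      = ∑ᶠ i ∈ insert l (Iio l), f i := by simp only [Iio_insert, mem_Iic, finsum_eq_if]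
    _ = f l + ∑ᶠ i ∈ Iio l, f i :=
        finsum_mem_insert' f self_notMem_Iio (hf.subset inter_subset_right)
    _ = (∑ᶠ i, if i < l then f i else 0) + f l := by simp only [add_comm, mem_Iio, finsum_eq_if]

theorem finsum_ite_le_sub_eq [LinearOrder ι] [AddCommGroup M] {a b : ι → M}
    (ha : HasFiniteSupport a) (hb : HasFiniteSupport b) (l : ι) :
    ∑ᶠ i, (if i ≤ l then (a - b) i else 0) =
      (∑ᶠ i, if i < l then a i else 0) + a l - ∑ᶠ i, if i ≤ l then b i else 0 := by
  simp only [Pi.sub_apply, finsum_ite_sub ha hb, finsum_ite_le_eq_add ha]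

theorem eq_of_lowest_ne_zero [LinearOrder ι] [Zero M] {f : ι → M} {σ τ : ι}
    (hσ : f σ ≠ 0) (hσmin : ∀ i < σ, f i = 0) (hτ : f τ ≠ 0) (hτmin : ∀ i < τ, f i = 0) :
    σ = τ :=
  le_antisymm (not_lt.1 fun h => hτ (hσmin τ h)) (not_lt.1 fun h => hσ (hτmin σ h))

section Conditions

variable [LinearOrder ι]

def ConditionOne (a q : ι → ℤ) (σ : ι) : Prop :=
  (∀ l, l < σ → a l = 0) ∧ a σ = q σ ∧ 0 < q σ ∧
    ∀ l, σ < l → max (q l) 0 ≤ a l ∧ a l < ∑ᶠ i, if i ≤ l then q i else 0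

def ConditionTwo (a b : ι → ℤ) : Prop :=
  (∀ i, 0 ≤ a i) ∧ (∀ i, 0 ≤ b i) ∧
    ∃ τ, a τ ≠ 0 ∧ (∀ i, i < τ → a i = 0) ∧ (∀ i, i ≤ τ → b i = 0) ∧
      ∀ l, τ < l → (∑ᶠ i, if i ≤ l then b i else 0) < ∑ᶠ i, if i < l then a i else 0

variable {a b : ι → ℤ} (ha : HasFiniteSupport a) (hb : HasFiniteSupport b) {σ : ι}
include ha hb

theorem conditionTwo_of_conditionOne (hσmin : ∀ i < σ, (a - b) i = 0)
    (h : ConditionOne a (a - b) σ) : ConditionTwo a b := by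
  obtain ⟨ha_lt, haσ, hqσ, ha_gt⟩ := h
  have ha_nonneg (i : ι) : 0 ≤ a i := by
    rcases lt_trichotomy i σ with hi | rfl | hi
    · exact (ha_lt i hi).ge
    · exact haσ ▸ hqσ.le
    · exact (le_max_right _ _).trans (ha_gt i hi).1
  have hb_le (i : ι) (hi : i ≤ σ) : b i = 0 := by
    rcases hi.lt_or_eq with hi | rfl
    · simpa [ha_lt i hi] using hσmin i hi
    · exact sub_eq_self.1 haσ.symm
  have hb_nonneg (i : ι) : 0 ≤ b i := by
    rcases le_or_gt i σ with hi | hi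
    · exact (hb_le i hi).ge
    · simpa using (le_max_left _ _).trans (ha_gt i hi).1
  refine ⟨ha_nonneg, hb_nonneg, σ, haσ ▸ hqσ.ne', ha_lt, hb_le, fun l hl => ?_⟩
  have := (ha_gt l hl).2
  rw [finsum_ite_le_sub_eq ha hb] at this
  linarith

theorem conditionOne_of_conditionTwo (hσ : (a - b) σ ≠ 0) (hσmin : ∀ i < σ, (a - b) i = 0)
    (h : ConditionTwo a b) : ConditionOne a (a - b) σ := by
  obtain ⟨ha_nonneg, hb_nonneg, τ, haτ, ha_lt, hb_le, hsum⟩ := h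
  obtain rfl : σ = τ := eq_of_lowest_ne_zero hσ hσmin (by simpa [hb_le τ le_rfl])
    fun i hi => by simp [ha_lt i hi, hb_le i hi.le]
  have haσ : a σ = (a - b) σ := by simp [hb_le σ le_rfl]
  refine ⟨ha_lt, haσ, haσ ▸ (ha_nonneg σ).lt_of_ne' haτ, fun l hl => ⟨?_, ?_⟩⟩
  · exact max_le (by simpa using hb_nonneg l) (ha_nonneg l)
  · rw [finsum_ite_le_sub_eq ha hb]
    linarith [hsum l hl]

end Conditions

/-- Lemma 5.1.1, (1) ⇔ (2): for finitely supported integer sequences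
`(a i)`, `(b i)` with `q i = a i - b i` not identically zero and lowest nonzero term
`q σ · t^σ`, conditions (1) and (2) below are equivalent. -/
theorem theoremC_conditions_equivalent
    (a b : ℤ → ℤ)
    (hafin : (Function.support a).Finite) (hbfin : (Function.support b).Finite)
    (q : ℤ → ℤ) (hq : ∀ i : ℤ, q i = a i - b i)
    (σ : ℤ) (hσ : q σ ≠ 0) (hσmin : ∀ i : ℤ, i < σ → q i = 0) :
    -- Condition (1)
    ((∀ l : ℤ, l < σ → a l = 0) ∧ a σ = q σ ∧ 0 < q σ ∧
      ∀ l : ℤ, σ < l →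
        max (q l) 0 ≤ a l ∧ a l < ∑ᶠ i : ℤ, (if i ≤ l then q i else 0)) ↔
    -- Condition (2)
    ((∀ i : ℤ, 0 ≤ a i) ∧ (∀ i : ℤ, 0 ≤ b i) ∧
      ∃ τ : ℤ, a τ ≠ 0 ∧ (∀ i : ℤ, i < τ → a i = 0) ∧
        (∀ i : ℤ, i ≤ τ → b i = 0) ∧
        ∀ l : ℤ, τ < l →
          (∑ᶠ i : ℤ, (if i ≤ l then b i else 0)) <
            ∑ᶠ i : ℤ, (if i < l then a i else 0)) := by
  obtain rfl : q = a - b := funext hq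
  exact ⟨conditionTwo_of_conditionOne hafin hbfin hσmin,
    conditionOne_of_conditionTwo hafin hbfin hσ hσmin⟩
end

section
/- Let (a_i), (b_i) be finitely supported sequences of nonnegative integers with lowest nonzero a-index τ, satisfying b_i = 0 for i ≤ τ and ∑_{i≤l} b_i < ∑_{i<l} a_i for all l > τ. Set m = ∑ a_i, n = ∑ b_i. Then n < m and the associated ladder L_{a,b} ⊆ [1,m]×[1,n] contains every pair (α,β) with β ≥ α - 1, and conversely. -/
/-- `listingFun c α` is the `α`-th entry (indexed from 1) of the nondecreasing
sequence `S(c)` listing each index `i` with multiplicity `c i`: it is the least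
`i` such that `∑_{j ≤ i} c j ≥ α`. -/
noncomputable def listingFun (c : ℤ → ℕ) (α : ℕ) : ℤ :=
  sInf {i : ℤ | (α : ℤ) ≤ ∑ᶠ j : ℤ, (if j ≤ i then (c j : ℤ) else 0)}

open Function

/-- Partial sum function. -/
noncomputable def Fps (c : ℤ → ℕ) (i : ℤ) : ℤ :=
  ∑ᶠ j : ℤ, (if j ≤ i then (c j : ℤ) else 0)

lemma Fps_eq (c : ℤ → ℕ) (hc : (support c).Finite) (i : ℤ) :
    Fps c i = ∑ j ∈ hc.toFinset, (if j ≤ i then (c j : ℤ) else 0) := by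
  apply finsum_eq_finset_sum_of_support_subset
  intro j hj
  simp only [Function.mem_support, ne_eq] at hj
  have : c j ≠ 0 := by intro h; apply hj; simp [h]
  simpa [Set.Finite.coe_toFinset] using this

lemma Fps_mono (c : ℤ → ℕ) (hc : (support c).Finite) : Monotone (Fps c) := by
  intro i1 i2 h
  rw [Fps_eq c hc, Fps_eq c hc]
  apply Finset.sum_le_sum
  intro j _
  split_ifs with h1 h2 <;> omega

lemma Fps_nonneg (c : ℤ → ℕ) (hc : (support c).Finite) (i : ℤ) : 0 ≤ Fps c i := by
  rw [Fps_eq c hc]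
  apply Finset.sum_nonneg
  intro j _; split_ifs <;> positivity

lemma Fps_exists_lo (c : ℤ → ℕ) (hc : (support c).Finite) :
    ∃ i₀ : ℤ, ∀ i ≤ i₀, Fps c i = 0 := by
  obtain ⟨L, hL⟩ := hc.bddBelow
  refine ⟨L - 1, fun i hi => ?_⟩
  rw [Fps_eq c hc]
  apply Finset.sum_eq_zero
  intro j hj
  rw [Set.Finite.mem_toFinset] at hj
  have := hL hj
  have : ¬ (j ≤ i) := by omega
  simp [this]

lemma Fps_exists_hi (c : ℤ → ℕ) (hc : (support c).Finite) :
    ∃ i₁ : ℤ, ∀ i, i₁ ≤ i → Fps c i = ∑ j ∈ hc.toFinset, (c j : ℤ) := by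
  obtain ⟨L, hL⟩ := hc.bddAbove
  refine ⟨L, fun i hi => ?_⟩
  rw [Fps_eq c hc]
  apply Finset.sum_congr rfl
  intro j hj
  rw [Set.Finite.mem_toFinset] at hj
  have := hL hj
  have : j ≤ i := by omega
  simp [this]

lemma Fps_sub (c : ℤ → ℕ) (hc : (support c).Finite) (i : ℤ) :
    Fps c i - Fps c (i - 1) = (c i : ℤ) := by
  rw [Fps_eq c hc, Fps_eq c hc, ← Finset.sum_sub_distrib]
  have : ∀ j ∈ hc.toFinset,
      ((if j ≤ i then (c j : ℤ) else 0) - (if j ≤ i - 1 then (c j : ℤ) else 0))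
      = if j = i then (c j : ℤ) else 0 := by
    intro j _; split_ifs <;> omega
  rw [Finset.sum_congr rfl this, Finset.sum_ite_eq' hc.toFinset i (fun j => (c j : ℤ))]
  split_ifs with h
  · rfl
  · rw [Set.Finite.mem_toFinset, Function.mem_support, not_not] at h
    simp [h]

lemma listingFun_eq_sInf (c : ℤ → ℕ) (α : ℕ) :
    listingFun c α = sInf {i : ℤ | (α : ℤ) ≤ Fps c i} := rfl

lemma listing_spec (c : ℤ → ℕ) (hc : (support c).Finite) (α : ℕ) (hα : 1 ≤ α)
    (hαt : (α : ℤ) ≤ ∑ j ∈ hc.toFinset, (c j : ℤ)) :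
    (α : ℤ) ≤ Fps c (listingFun c α) ∧ ∀ i : ℤ, i < listingFun c α → Fps c i < (α : ℤ) := by
  obtain ⟨i₀, hi₀⟩ := Fps_exists_lo c hc
  obtain ⟨i₁, hi₁⟩ := Fps_exists_hi c hc
  set S : Set ℤ := {i : ℤ | (α : ℤ) ≤ Fps c i} with hS
  have hne : S.Nonempty := ⟨i₁, by simp only [hS, Set.mem_setOf_eq]; rw [hi₁ i₁ le_rfl]; exact hαt⟩
  have hbdd : BddBelow S := by
    refine ⟨i₀, fun i hi => ?_⟩
    by_contra h
    have : Fps c i = 0 := hi₀ i (by omega)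
    simp only [hS, Set.mem_setOf_eq] at hi
    omega
  have hmem : sInf S ∈ S := Int.csInf_mem hne hbdd
  have key : (α : ℤ) ≤ Fps c (sInf S) ∧ ∀ i : ℤ, i < sInf S → Fps c i < (α : ℤ) := by
    refine ⟨hmem, fun i hi => ?_⟩
    by_contra h
    have : i ∈ S := by simpa [hS] using not_lt.mp h
    exact absurd (csInf_le hbdd this) (by omega)
  rw [listingFun_eq_sInf]
  exact key

/-- Lemma 5.1.1, (2) ⇔ (3): for finitely supported sequences
`a b : ℤ → ℕ` with `m = ∑ a i`, `n = ∑ b i`, the conditions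
"`a` has lowest nonzero index `τ`, `b i = 0` for `i ≤ τ` and
`∑_{i≤l} b i < ∑_{i<l} a i` for all `l > τ`" hold if and only if `n < m` and the
ladder `L_{a,b} = {(α,β) ∈ [1,m]×[1,n] : S(a)_α < S(b)_β}` contains every `(α,β)`
with `β ≥ α - 1`. -/
theorem betti_conditions_iff_ladder
    (a b : ℤ → ℕ)
    (hafin : (Function.support a).Finite) (hbfin : (Function.support b).Finite)
    (m n : ℕ) (hm : m = ∑ᶠ i : ℤ, a i) (hn : n = ∑ᶠ i : ℤ, b i) :
    (∃ τ : ℤ, a τ ≠ 0 ∧ (∀ i : ℤ, i < τ → a i = 0) ∧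
      (∀ i : ℤ, i ≤ τ → b i = 0) ∧
      ∀ l : ℤ, τ < l →
        (∑ᶠ i : ℤ, (if i ≤ l then (b i : ℤ) else 0)) <
          ∑ᶠ i : ℤ, (if i < l then (a i : ℤ) else 0)) ↔
    (n < m ∧ ∀ α β : ℕ, 1 ≤ α → α ≤ m → 1 ≤ β → β ≤ n →
      (α : ℤ) - 1 ≤ (β : ℤ) → listingFun a α < listingFun b β) := by
  have hmZ : (m : ℤ) = ∑ j ∈ hafin.toFinset, (a j : ℤ) := by
    rw [hm, finsum_eq_sum a hafin]; push_cast; rfl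
  have hnZ : (n : ℤ) = ∑ j ∈ hbfin.toFinset, (b j : ℤ) := by
    rw [hn, finsum_eq_sum b hbfin]; push_cast; rfl
  have hFb : ∀ l : ℤ, (∑ᶠ i : ℤ, (if i ≤ l then (b i : ℤ) else 0)) = Fps b l := fun l => rfl
  have hFa : ∀ l : ℤ, (∑ᶠ i : ℤ, (if i < l then (a i : ℤ) else 0)) = Fps a (l - 1) := by
    intro l
    apply finsum_congr
    intro i
    have h : (i < l) ↔ (i ≤ l - 1) := by omega
    simp only [h]
  obtain ⟨i₁a, hi₁a⟩ := Fps_exists_hi a hafin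
  obtain ⟨i₁b, hi₁b⟩ := Fps_exists_hi b hbfin
  have hFam : ∀ i, i₁a ≤ i → Fps a i = (m : ℤ) := fun i hi => by rw [hi₁a i hi, hmZ]
  have hFbn : ∀ i, i₁b ≤ i → Fps b i = (n : ℤ) := fun i hi => by rw [hi₁b i hi, hnZ]
  have hFble : ∀ i, Fps b i ≤ (n : ℤ) := by
    intro i
    calc Fps b i ≤ Fps b (max i i₁b) := Fps_mono b hbfin (le_max_left _ _)
    _ = n := hFbn _ (le_max_right _ _)
  have hFale : ∀ i, Fps a i ≤ (m : ℤ) := by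
    intro i
    calc Fps a i ≤ Fps a (max i i₁a) := Fps_mono a hafin (le_max_left _ _)
    _ = m := hFam _ (le_max_right _ _)
  constructor
  · rintro ⟨τ, haτ, hlow, hbz, hstep⟩
    have hstep' : ∀ l, τ < l → Fps b l < Fps a (l - 1) := by
      intro l hl; have := hstep l hl; rwa [hFb, hFa] at this
    have hnm : n < m := by
      set l := max (max (i₁a + 1) i₁b) (τ + 1) with hldef
      have hτl : τ < l := lt_of_lt_of_le (lt_add_one τ) (le_max_right _ _)
      have h := hstep' l hτl
      have hbl : i₁b ≤ l := le_trans (le_max_right _ _) (le_max_left _ _)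
      have hal : i₁a ≤ l - 1 := by
        have : i₁a + 1 ≤ l := le_trans (le_max_left _ _) (le_max_left _ _)
        omega
      rw [hFbn l hbl, hFam (l - 1) hal] at h
      exact_mod_cast h
    refine ⟨hnm, ?_⟩
    intro α β h1α hαm h1β hβn hβα
    obtain ⟨hA1, hA2⟩ := listing_spec a hafin α h1α (by rw [← hmZ]; exact_mod_cast hαm)
    obtain ⟨hB1, hB2⟩ := listing_spec b hbfin β h1β (by rw [← hnZ]; exact_mod_cast hβn)
    by_contra hcon
    push_neg at hcon
    have hτxb : τ < listingFun b β := by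
      by_contra h
      push_neg at h
      have hz : Fps b (listingFun b β) = 0 := by
        rw [Fps_eq b hbfin]
        apply Finset.sum_eq_zero
        intro j hj
        split_ifs with hji
        · rw [hbz j (hji.trans h)]; rfl
        · rfl
      omega
    have h1 := hstep' (listingFun b β) hτxb
    have h2 : Fps a (listingFun b β - 1) < (α : ℤ) := hA2 _ (by omega)
    omega
  · rintro ⟨hnm, hlad⟩
    have hm1 : 1 ≤ m := by omega
    obtain ⟨hT1, hT2⟩ := listing_spec a hafin 1 le_rfl (by rw [← hmZ]; exact_mod_cast hm1)
    set τ := listingFun a 1 with hτdef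
    have hFzero : ∀ i, i < τ → Fps a i = 0 := by
      intro i hi
      have h1 := hT2 i hi
      have h2 := Fps_nonneg a hafin i
      push_cast at h1
      omega
    refine ⟨τ, ?_, ?_, ?_, ?_⟩
    · intro hz
      have h := Fps_sub a hafin τ
      rw [hFzero (τ - 1) (by omega), hz] at h
      push_cast at h hT1
      omega
    · intro i hi
      have h := Fps_sub a hafin i
      rw [hFzero i hi, hFzero (i - 1) (by omega)] at h
      omega
    · intro i hi
      by_contra hbi
      have hin : i ∈ hbfin.toFinset := by
        rwa [Set.Finite.mem_toFinset, Function.mem_support]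
      have hbig : (b i : ℤ) ≤ Fps b i := by
        rw [Fps_eq b hbfin]
        have := Finset.single_le_sum (f := fun j => if j ≤ i then (b j : ℤ) else 0)
          (fun j _ => by split_ifs <;> positivity) hin
        simpa using this
      have hbi1 : 1 ≤ b i := Nat.one_le_iff_ne_zero.mpr hbi
      have hn1 : 1 ≤ n := by
        have := hFble i
        omega
      obtain ⟨hB1, hB2⟩ := listing_spec b hbfin 1 le_rfl (by rw [← hnZ]; exact_mod_cast hn1)
      have hlt := hlad 1 1 le_rfl hm1 le_rfl hn1 (by norm_num)
      have hsm : Fps b i < ((1 : ℕ) : ℤ) := hB2 i (by omega)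
      push_cast at hsm
      omega
    · intro l hl
      rw [hFb, hFa]
      by_contra hcon
      push_neg at hcon
      have h1 : ((1 : ℕ) : ℤ) ≤ Fps a (l - 1) := le_trans hT1 (Fps_mono a hafin (by omega))
      push_cast at h1
      have h2 : Fps a (l - 1) ≤ (m : ℤ) := hFale _
      rcases eq_or_lt_of_le h2 with he | hlt
      · have := hFble l; omega
      · set β' := (Fps a (l - 1)).toNat with hβ'def
        have hβ'Z : (β' : ℤ) = Fps a (l - 1) := Int.toNat_of_nonneg (by omega)
        have h1β' : 1 ≤ β' := by omega
        have hβ'n : β' ≤ n := by have := hFble l; omega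
        have hα'm : β' + 1 ≤ m := by omega
        obtain ⟨hA1, hA2⟩ := listing_spec a hafin (β' + 1) (by omega)
          (by rw [← hmZ]; push_cast; omega)
        obtain ⟨hB1, hB2⟩ := listing_spec b hbfin β' h1β' (by rw [← hnZ]; push_cast; omega)
        have hlt2 := hlad (β' + 1) β' (by omega) hα'm h1β' hβ'n (by push_cast; omega)
        have hla : l ≤ listingFun a (β' + 1) := by
          by_contra h
          push_neg at h
          have hle : Fps a (listingFun a (β' + 1)) ≤ Fps a (l - 1) :=
            Fps_mono a hafin (by omega)
          push_cast at hA1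
          omega
        have hlb : listingFun b β' ≤ l := by
          by_contra h
          push_neg at h
          have := hB2 l h
          omega
        omega
end

section
/- Let s(t) be a Castelnuovo polynomial with parameter σ = max_i s_i, and set q(t) = 1 - (1-t)²s(t). Then the number of finitely supported nonnegative integer sequences (a_i) satisfying the conditions of Theorem C equals ∏_{l>σ} (1 + min(s_{l-1} - s_l, s_{l-2} - s_{l-1})). -/
/-- Extension of `s : ℕ → ℕ` to `ℤ` by zero in negative degrees. -/
def extZ (s : ℕ → ℕ) : ℤ → ℤ := fun j => if 0 ≤ j then (s j.toNat : ℤ) else 0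

/-- Corollary 1.6: for a Castelnuovo polynomial `s` with parameter
`σ` and `q(t) = 1 - (1-t)² s(t)`, the number of finitely supported nonnegative
sequences `(a i)` satisfying the conditions of Theorem C equals
`∏_{l > σ} (1 + min (s_{l-1} - s_l) (s_{l-2} - s_{l-1}))`. -/
theorem card_theoremC_solutions
    (s : ℕ → ℕ) (σ : ℕ)
    (hstair : ∀ i : ℕ, i < σ → s i = i + 1) (hσs : s σ ≤ σ)
    (hanti : ∀ i : ℕ, σ ≤ i → s (i + 1) ≤ s i)
    (N : ℕ) (hN : ∀ i : ℕ, N ≤ i → s i = 0)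
    (q : ℤ → ℤ)
    (hq : ∀ i : ℤ, q i =
      (if i = 0 then 1 else 0) - (extZ s i - 2 * extZ s (i - 1) + extZ s (i - 2))) :
    {a : ℤ → ℤ | (Function.support a).Finite ∧ (∀ i : ℤ, 0 ≤ a i) ∧
        ∃ τ : ℤ, (∀ i : ℤ, i < τ → q i = 0) ∧ q τ ≠ 0 ∧
          (∀ l : ℤ, l < τ → a l = 0) ∧ a τ = q τ ∧ 0 < q τ ∧
          ∀ l : ℤ, τ < l →
            max (q l) 0 ≤ a l ∧ a l < ∑ᶠ i : ℤ, (if i ≤ l then q i else 0)}.ncard =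
      ∏ l ∈ Finset.Icc ((σ : ℤ) + 1) ((N : ℤ) + 2),
        (1 + min (extZ s (l - 1) - extZ s l) (extZ s (l - 2) - extZ s (l - 1))) := by
  have extZ_coe : ∀ n : ℕ, extZ s (n : ℤ) = (s n : ℤ) := by intro n; simp [extZ]
  have extZ_neg : ∀ j : ℤ, j < 0 → extZ s j = 0 := by
    intro j hj; simp [extZ, not_le.mpr hj]
  have extZ_zero : ∀ j : ℤ, (N : ℤ) ≤ j → extZ s j = 0 := by
    intro j hj
    have h0 : 0 ≤ j := le_trans (by positivity) hj
    simp only [extZ, if_pos h0]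
    have : s j.toNat = 0 := hN _ (by omega)
    simp [this]
  have hq_neg : ∀ i : ℤ, i < 0 → q i = 0 := by
    intro i hi
    rw [hq, extZ_neg i hi, extZ_neg (i-1) (by omega), extZ_neg (i-2) (by omega), if_neg (by omega)]
    ring
  have hq0 : q 0 = 1 - (s 0 : ℤ) := by
    rw [hq]; norm_num [extZ]
  have hq1 : q 1 = 2 * (s 0 : ℤ) - (s 1 : ℤ) := by
    rw [hq]; norm_num [extZ]
  have hq_nat : ∀ n : ℕ, 2 ≤ n →
      q (n : ℤ) = 2 * (s (n-1) : ℤ) - (s n : ℤ) - (s (n-2) : ℤ) := by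
    intro n hn
    rw [hq, if_neg (by omega)]
    have e1 : (n : ℤ) - 1 = ((n - 1 : ℕ) : ℤ) := by omega
    have e2 : (n : ℤ) - 2 = ((n - 2 : ℕ) : ℤ) := by omega
    rw [e1, e2, extZ_coe, extZ_coe, extZ_coe]; ring
  have hq_lt : ∀ i : ℤ, i < (σ : ℤ) → q i = 0 := by
    intro i hi
    rcases lt_or_ge i 0 with h | h
    · exact hq_neg i h
    · lift i to ℕ using h
      have hiσ : i < σ := by exact_mod_cast hi
      match i, hiσ with
      | 0, h0 =>
        rw [show ((0:ℕ):ℤ) = 0 by norm_num, hq0, hstair 0 h0]; norm_num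
      | 1, h1 =>
        rw [show ((1:ℕ):ℤ) = 1 by norm_num, hq1, hstair 0 (by omega), hstair 1 h1]; norm_num
      | (k+2), hk =>
        rw [hq_nat (k+2) (by omega)]
        rw [show k+2-1 = k+1 from rfl, show k+2-2 = k from rfl,
          hstair (k+1) (by omega), hstair k (by omega), hstair (k+2) hk]
        push_cast; ring
  have hqσ : q (σ : ℤ) = (σ : ℤ) + 1 - (s σ : ℤ) := by
    match σ, hσs, hstair with
    | 0, h0, _ => rw [show ((0:ℕ):ℤ) = 0 by norm_num, hq0]; omega
    | 1, h1, hst => rw [show ((1:ℕ):ℤ) = 1 by norm_num, hq1, hst 0 (by omega)]; push_cast; ring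
    | (k+2), hk, hst =>
      rw [hq_nat (k+2) (by omega), show k+2-1 = k+1 from rfl, show k+2-2 = k from rfl,
        hst (k+1) (by omega), hst k (by omega)]
      push_cast; ring
  have hqσpos : 0 < q (σ : ℤ) := by rw [hqσ]; omega
  have hσN : (σ : ℤ) ≤ (N : ℤ) + 2 := by
    by_contra hc
    push_neg at hc
    have h1 : 1 ≤ σ := by omega
    have := hstair (σ - 1) (by omega)
    have := hN (σ - 1) (by omega)
    omega
  have hq_big : ∀ i : ℤ, (N : ℤ) + 2 < i → q i = 0 := by
    intro i hi
    lift i to ℕ using (by omega)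
    have hi' : N + 2 < i := by exact_mod_cast hi
    rw [hq_nat i (by omega), hN i (by omega), hN (i-1) (by omega), hN (i-2) (by omega)]
    norm_num
  have hsupp : ∀ l : ℤ, (Function.support fun i => if i ≤ l then q i else 0)
      ⊆ ↑(Finset.Icc (0 : ℤ) l) := by
    intro l i hi
    simp only [Function.mem_support] at hi
    simp only [Finset.coe_Icc, Set.mem_Icc]
    constructor
    · by_contra h
      push_neg at h
      apply hi
      by_cases hil : i ≤ l
      · rw [if_pos hil]; exact hq_neg i (by omega)
      · rw [if_neg hil]
    · by_contra h
      exact hi (if_neg (by omega))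
  have hicc_ins : ∀ n : ℤ, 0 ≤ n →
      Finset.Icc (0:ℤ) (n+1) = insert (n+1) (Finset.Icc (0:ℤ) n) := by
    intro n hn
    ext x
    simp only [Finset.mem_Icc, Finset.mem_insert]
    omega
  have key : ∀ l : ℤ, 0 ≤ l →
      ∑ i ∈ Finset.Icc (0:ℤ) l, q i = 1 + extZ s (l-1) - extZ s l := by
    intro l
    refine Int.le_induction (m := 0)
      (motive := fun l _ => ∑ i ∈ Finset.Icc (0:ℤ) l, q i = 1 + extZ s (l-1) - extZ s l) ?_ ?_ l
    · show ∑ i ∈ Finset.Icc (0:ℤ) 0, q i = _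
      rw [Finset.Icc_self, Finset.sum_singleton, hq0,
        extZ_neg ((0:ℤ)-1) (by norm_num)]
      have : extZ s 0 = (s 0 : ℤ) := by norm_num [extZ]
      rw [this]; ring
    · intro n hn ih
      show ∑ i ∈ Finset.Icc (0:ℤ) (n+1), q i = _
      rw [hicc_ins n hn, Finset.sum_insert (by simp [Finset.mem_Icc]),
        ih, hq, if_neg (by omega)]
      have e1 : (n:ℤ) + 1 - 1 = n := by ring
      have e2 : (n:ℤ) + 1 - 2 = n - 1 := by ring
      rw [e1, e2]; ring
  have hsum : ∀ l : ℤ, 0 ≤ l →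
      (∑ᶠ i : ℤ, if i ≤ l then q i else 0) = 1 + extZ s (l-1) - extZ s l := by
    intro l hl
    rw [finsum_eq_finset_sum_of_support_subset _ (hsupp l)]
    rw [show (∑ i ∈ Finset.Icc (0:ℤ) l, if i ≤ l then q i else 0)
        = ∑ i ∈ Finset.Icc (0:ℤ) l, q i from
      Finset.sum_congr rfl fun i hi => if_pos (Finset.mem_Icc.mp hi).2]
    exact key l hl
  set I : Finset ℤ := Finset.Icc ((σ : ℤ) + 1) ((N : ℤ) + 2) with hI
  set A : ℤ → Finset ℤ :=
    fun l => Finset.Icc (max (q l) 0) (extZ s (l - 1) - extZ s l) with hA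
  have hmemI : ∀ l : ℤ, l ∈ I ↔ ((σ : ℤ) + 1 ≤ l ∧ l ≤ (N : ℤ) + 2) := by
    intro l; rw [hI, Finset.mem_Icc]
  have hmemA : ∀ l x : ℤ,
      x ∈ A l ↔ (max (q l) 0 ≤ x ∧ x ≤ extZ s (l - 1) - extZ s l) := by
    intro l x; rw [hA]; simp [Finset.mem_Icc]
  have hSeq : {a : ℤ → ℤ | (Function.support a).Finite ∧ (∀ i : ℤ, 0 ≤ a i) ∧
        ∃ τ : ℤ, (∀ i : ℤ, i < τ → q i = 0) ∧ q τ ≠ 0 ∧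
          (∀ l : ℤ, l < τ → a l = 0) ∧ a τ = q τ ∧ 0 < q τ ∧
          ∀ l : ℤ, τ < l →
            max (q l) 0 ≤ a l ∧ a l < ∑ᶠ i : ℤ, (if i ≤ l then q i else 0)}
      = {a : ℤ → ℤ | (∀ l : ℤ, l < (σ : ℤ) → a l = 0) ∧ a (σ : ℤ) = q (σ : ℤ) ∧
          (∀ l ∈ I, a l ∈ A l) ∧ ∀ l : ℤ, (N : ℤ) + 2 < l → a l = 0} := by
    ext a
    simp only [Set.mem_setOf_eq]
    constructor
    · rintro ⟨hfin, hpos, τ, h1, h2, h3, h4, h5, h6⟩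
      have hτ : τ = (σ : ℤ) := by
        rcases lt_trichotomy τ (σ : ℤ) with h | h | h
        · exact absurd (hq_lt τ h) h2
        · exact h
        · exact absurd (h1 _ h) hqσpos.ne'
      subst hτ
      refine ⟨h3, h4, ?_, ?_⟩
      · intro l hl
        rw [hmemI] at hl
        obtain ⟨hb1, hb2⟩ := h6 l (by omega)
        rw [hsum l (by omega)] at hb2
        rw [hmemA]
        exact ⟨hb1, by omega⟩
      · intro l hl
        obtain ⟨hb1, hb2⟩ := h6 l (by omega)
        rw [hsum l (by omega), extZ_zero (l - 1) (by omega),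
          extZ_zero l (by omega)] at hb2
        have := hpos l
        omega
    · rintro ⟨g1, g2, g3, g4⟩
      have gA : ∀ l : ℤ, l ∈ I →
          max (q l) 0 ≤ a l ∧ a l ≤ extZ s (l - 1) - extZ s l := by
        intro l hl
        have := g3 l hl
        rwa [hmemA] at this
      refine ⟨?_, ?_, (σ : ℤ), hq_lt, hqσpos.ne', g1, g2, hqσpos, ?_⟩
      · apply Set.Finite.subset (Finset.finite_toSet (Finset.Icc (σ : ℤ) ((N : ℤ) + 2)))
        intro x hx
        simp only [Function.mem_support] at hx
        simp only [Finset.coe_Icc, Set.mem_Icc]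
        constructor
        · by_contra h; exact hx (g1 x (by omega))
        · by_contra h; exact hx (g4 x (by omega))
      · intro i
        rcases lt_trichotomy i (σ : ℤ) with h | h | h
        · rw [g1 i h]
        · rw [h, g2]; exact hqσpos.le
        · by_cases hi2 : i ≤ (N : ℤ) + 2
          · have := (gA i ((hmemI i).mpr (by omega))).1
            have h0 : (0 : ℤ) ≤ max (q i) 0 := le_max_right _ _
            omega
          · rw [g4 i (by omega)]
      · intro l hl
        by_cases hmem : l ∈ I
        · obtain ⟨hb1, hb2⟩ := gA l hmem
          refine ⟨hb1, ?_⟩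
          rw [hsum l (by omega)]
          omega
        · have hl2 : (N : ℤ) + 2 < l := by
            have : ¬((σ : ℤ) + 1 ≤ l ∧ l ≤ (N : ℤ) + 2) := fun hc => hmem ((hmemI l).mpr hc)
            omega
          rw [g4 l hl2]
          refine ⟨by rw [hq_big l hl2]; simp, ?_⟩
          rw [hsum l (by omega), extZ_zero (l - 1) (by omega), extZ_zero l (by omega)]
          norm_num
  rw [hSeq, ← Nat.card_coe_set_eq]
  have e : ↥{a : ℤ → ℤ | (∀ l : ℤ, l < (σ : ℤ) → a l = 0) ∧ a (σ : ℤ) = q (σ : ℤ) ∧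
          (∀ l ∈ I, a l ∈ A l) ∧ ∀ l : ℤ, (N : ℤ) + 2 < l → a l = 0}
      ≃ (∀ l : {x // x ∈ I}, {y // y ∈ A (l : ℤ)}) := by
    refine
      { toFun := fun a => fun l => ⟨a.1 l.1, ?_⟩
        invFun := fun b => ⟨fun l => if h : l ∈ I then (b ⟨l, h⟩ : ℤ)
            else if l = (σ : ℤ) then q (σ : ℤ) else 0, ?_, ?_, ?_, ?_⟩
        left_inv := ?_
        right_inv := ?_ }
    · exact a.2.2.2.1 l.1 l.2
    · intro l hl
      dsimp only
      rw [dif_neg (fun hc => by have := (hmemI l).mp hc; omega), if_neg (by omega)]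
    · dsimp only
      rw [dif_neg (fun hc => by have := (hmemI (σ : ℤ)).mp hc; omega), if_pos rfl]
    · intro l hl
      dsimp only
      rw [dif_pos hl]
      exact (b ⟨l, hl⟩).2
    · intro l hl
      dsimp only
      rw [dif_neg (fun hc => by have := (hmemI l).mp hc; omega), if_neg (by omega)]
    · intro a
      apply Subtype.ext
      funext l
      dsimp only
      by_cases h : l ∈ I
      · simp only [dif_pos h]
      · rw [dif_neg h]
        by_cases h2 : l = (σ : ℤ)
        · rw [if_pos h2, h2]
          exact a.2.2.1.symm
        · rw [if_neg h2]
          have hni : ¬((σ : ℤ) + 1 ≤ l ∧ l ≤ (N : ℤ) + 2) := fun hc => h ((hmemI l).mpr hc)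
          rcases lt_or_ge l (σ : ℤ) with h3 | h3
          · exact (a.2.1 l h3).symm
          · exact (a.2.2.2.2 l (by omega)).symm
    · intro b
      funext l
      apply Subtype.ext
      show (if h : (l : ℤ) ∈ I then (b ⟨(l : ℤ), h⟩ : ℤ) else _) = (b l : ℤ)
      rw [dif_pos l.2, Subtype.coe_eta]
  have cardA : ∀ l ∈ I, ((A l).card : ℤ) =
      1 + min (extZ s (l - 1) - extZ s l) (extZ s (l - 2) - extZ s (l - 1)) := by
    intro l hl
    rw [hmemI] at hl
    lift l to ℕ using (by omega) with n
    have hn1 : σ + 1 ≤ n := by exact_mod_cast hl.1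
    have hcard : ((A (n : ℤ)).card : ℕ) =
        (extZ s ((n : ℤ) - 1) - extZ s (n : ℤ) + 1 - max (q (n : ℤ)) 0).toNat :=
      Int.card_Icc _ _
    rw [hcard]
    match n, hn1 with
    | 1, h1 =>
      have hσ0 : σ = 0 := by omega
      have hs0 : s 0 = 0 := le_antisymm (hσ0 ▸ hσs) (Nat.zero_le _)
      have hs10 : s 1 ≤ s 0 := hanti 0 (by omega)
      have hs1 : s 1 = 0 := by omega
      have n1 : ((1 : ℕ) : ℤ) = 1 := by norm_num
      rw [n1]
      have v0 : extZ s ((1 : ℤ) - 1) = 0 := by norm_num [extZ, hs0]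
      have v1 : extZ s (1 : ℤ) = 0 := by norm_num [extZ, hs1]
      have vneg : extZ s ((1 : ℤ) - 2) = 0 := extZ_neg _ (by norm_num)
      have vq : q (1 : ℤ) = 0 := by rw [hq1, hs0, hs1]; norm_num
      rw [v0, v1, vneg, vq]
      norm_num
    | (k+2), hk =>
      have E0 : extZ s (((k + 2 : ℕ) : ℤ)) = (s (k + 2) : ℤ) := extZ_coe (k + 2)
      have E1 : extZ s (((k + 2 : ℕ) : ℤ) - 1) = (s (k + 1) : ℤ) := by
        rw [show ((k + 2 : ℕ) : ℤ) - 1 = ((k + 1 : ℕ) : ℤ) by push_cast; ring, extZ_coe]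
      have E2 : extZ s (((k + 2 : ℕ) : ℤ) - 2) = (s k : ℤ) := by
        rw [show ((k + 2 : ℕ) : ℤ) - 2 = ((k : ℕ) : ℤ) by push_cast; ring, extZ_coe]
      have hm1 : s (k + 2) ≤ s (k + 1) := hanti (k + 1) (by omega)
      have hm2 : s (k + 1) ≤ s k := by
        rcases Nat.lt_or_ge k σ with h | h
        · have hkσ : σ = k + 1 := by omega
          have h2 := hstair k h
          have h3 : s σ ≤ σ := hσs
          rw [hkσ] at h3
          omega
        · exact hanti k h
      have hqval : q (((k + 2 : ℕ)) : ℤ) =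
          2 * (s (k + 1) : ℤ) - (s (k + 2) : ℤ) - (s k : ℤ) := by
        rw [hq_nat (k + 2) (by omega), show k + 2 - 1 = k + 1 from rfl,
          show k + 2 - 2 = k from rfl]
      rw [E0, E1, E2, hqval]
      rcases le_total (2 * (s (k + 1) : ℤ) - (s (k + 2) : ℤ) - (s k : ℤ)) 0 with h | h
      · rw [max_eq_right h]
        rcases le_total ((s (k + 1) : ℤ) - (s (k + 2) : ℤ)) ((s k : ℤ) - (s (k + 1) : ℤ))
          with h' | h'
        · rw [min_eq_left h']; omega
        · rw [min_eq_right h']; omega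
      · rw [max_eq_left h]
        rcases le_total ((s (k + 1) : ℤ) - (s (k + 2) : ℤ)) ((s k : ℤ) - (s (k + 1) : ℤ))
          with h' | h'
        · rw [min_eq_left h']; omega
        · rw [min_eq_right h']; omega
  rw [Nat.card_congr e, Nat.card_eq_fintype_card, Fintype.card_pi]
  simp only [Fintype.card_coe]
  rw [Finset.prod_coe_sort I (fun l => (A l).card)]
  push_cast
  exact Finset.prod_congr rfl cardA
end

section
/- Let s(t) = ∑ s_j t^j be a Castelnuovo polynomial of weight n ≥ 2 with parameter σ. Then c := ∑_j s_j(s_{j+1} - s_{j+2}) satisfies c ≥ 1, and c ≥ 2σ - 1 - δe₁ where δ = 1 if s_σ < σ and 0 otherwise, and e₁ is the first nonzero term of the sequence (s_{j+1}-s_{j+2})_{j ≥ σ-2}. In particular c = 1 if and only if σ = 1 and the sequence of drops has length 1, which holds iff s(t) = 1 + t + t² + ... + t^{n-1}. -/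
/-!
Write `e_j = s_{j+1} - s_{j+2}`. Since `∑ e_j` and `∑ e_j (s_{j+1} + s_{j+2})` telescope to zero,
`2c = ∑ e_j (2 s_j - s_{j+1} - s_{j+2} - 1)`. From `j = σ - 1` on, `s` is nonincreasing and each term
is at least `e_j (e_j - 1) ≥ 0`; below, the terms are read off the staircase. With `d = σ - s_σ`
this gives `2c ≥ 4σ - 2 + d(d - 3)`, and `n ≥ 2` excludes `σ = 0` and, for `σ = 1`, `s_σ = 0`.
If `c = 1` the bound forces `σ = 1`, so `s` is a nonincreasing `0/1` sequence starting at index `0`.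
-/

open Function Finset

lemma Int.mul_sub_one_nonneg (d : ℤ) : 0 ≤ d * (d - 1) := by
  rcases le_or_gt d 0 with h | h <;> nlinarith

lemma Function.HasFiniteSupport.comp_add_right {G M : Type*} [AddGroup G] [Zero M] {f : G → M}
    (hf : f.HasFiniteSupport) (k : G) : (fun j ↦ f (j + k)).HasFiniteSupport :=
  hf.comp_of_injective (add_left_injective k)

lemma finsum_comp_add_sub_comp_add {G M : Type*} [AddGroup G] [AddCommGroup M] {f : G → M}
    (hf : f.HasFiniteSupport) (a b : G) : ∑ᶠ j, (f (j + a) - f (j + b)) = 0 := by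
  rw [finsum_sub_distrib (hf.comp_add_right a) (hf.comp_add_right b),
    show ∑ᶠ j, f (j + a) = ∑ᶠ j, f j from finsum_comp_equiv (Equiv.addRight a),
    show ∑ᶠ j, f (j + b) = ∑ᶠ j, f j from finsum_comp_equiv (Equiv.addRight b), sub_self]

lemma sum_le_finsum {α M : Type*} [AddCommMonoid M] [PartialOrder M] [IsOrderedAddMonoid M]
    {f : α → M} (hf : f.HasFiniteSupport) (s : Finset α) (h : ∀ x ∉ s, 0 ≤ f x) :
    ∑ x ∈ s, f x ≤ ∑ᶠ x, f x := by
  classical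
  rw [finsum_eq_sum_of_support_subset f (s := s ∪ hf.toFinset)
    fun x hx ↦ mem_coe.2 (mem_union_right _ (hf.mem_toFinset.2 hx))]
  exact sum_le_sum_of_subset_of_nonneg subset_union_left fun x _ hx ↦ h x hx

lemma antitoneOn_Ici_of_succ_le {α : Type*} [Preorder α] {f : ℤ → α} {a : ℤ}
    (hf : ∀ i, a ≤ i → f (i + 1) ≤ f i) : AntitoneOn f (Set.Ici a) :=
  antitoneOn_of_succ_le Set.ordConnected_Ici fun i _ hi _ ↦ by
    simpa [Order.succ_eq_add_one] using hf i hi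

lemma finsum_eq_sum_Ico_of_antitoneOn {M : Type*} [AddCommMonoid M] [PartialOrder M]
    {f : ℤ → M} (hneg : ∀ i < 0, f i = 0) (hpos : ∀ i, 0 ≤ f i) {a b : ℤ}
    (hanti : AntitoneOn f (Set.Ici a)) (hab : a ≤ b) (hb : f b = 0) :
    ∑ᶠ j, f j = ∑ j ∈ Ico 0 b, f j := by
  refine finsum_eq_sum_of_support_subset f fun j hj ↦ ?_
  rw [coe_Ico, Set.mem_Ico]
  constructor
  · by_contra hj0
    exact hj (hneg j (not_le.1 hj0))
  · by_contra hbj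
    exact hj (le_antisymm (hb ▸ hanti hab (hab.trans (not_lt.1 hbj)) (not_lt.1 hbj)) (hpos j))

lemma eq_ite_of_antitoneOn_of_le_one {f : ℤ → ℤ} (hf : f.HasFiniteSupport)
    (hneg : ∀ i < 0, f i = 0) (hpos : ∀ i, 0 ≤ f i) (hle : ∀ i, f i ≤ 1)
    (hanti : AntitoneOn f (Set.Ici 0)) (j : ℤ) :
    f j = if 0 ≤ j ∧ j < ∑ᶠ i, f i then 1 else 0 := by
  rcases lt_or_ge j 0 with hj | hj
  · rw [hneg j hj, if_neg fun h ↦ (not_le.2 hj) h.1]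
  rcases (by have := hpos j; have := hle j; omega : f j = 0 ∨ f j = 1) with h0 | h1
  · have hsum : ∑ i ∈ Ico 0 j, f i ≤ #(Ico 0 j) • 1 := sum_le_card_nsmul _ _ _ fun i _ ↦ hle i
    rw [← finsum_eq_sum_Ico_of_antitoneOn hneg hpos hanti hj h0, Int.card_Ico, nsmul_eq_mul,
      mul_one] at hsum
    rw [h0, if_neg]
    omega
  · have hsum : #(Icc 0 j) • 1 ≤ ∑ i ∈ Icc 0 j, f i := card_nsmul_le_sum _ _ _ fun i hi ↦ by
      rw [mem_Icc] at hi
      exact h1 ▸ hanti hi.1 hj hi.2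
    have := hsum.trans (sum_le_finsum hf _ fun i _ ↦ hpos i)
    rw [Int.card_Icc, nsmul_eq_mul, mul_one] at this
    rw [h1, if_pos]
    omega

lemma finsum_mul_sub_eq_one_of_eq_ite {s : ℤ → ℤ} {n : ℤ} (hn : 2 ≤ n)
    (hs : ∀ j, s j = if 0 ≤ j ∧ j < n then 1 else 0) :
    ∑ᶠ j, s j * (s (j + 1) - s (j + 2)) = 1 := by
  rw [finsum_eq_single _ (n - 2) fun j hj ↦ by simp only [hs]; split_ifs <;> omega]
  simp only [hs]
  split_ifs <;> omega

def dropWeight (s : ℤ → ℤ) (j : ℤ) : ℤ :=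
  (s (j + 1) - s (j + 2)) * (2 * s j - s (j + 1) - s (j + 2) - 1)

lemma dropWeight_hasFiniteSupport {s : ℤ → ℤ} (hs : s.HasFiniteSupport) :
    (dropWeight s).HasFiniteSupport :=
  ((hs.comp_add_right 1).fun_sub (hs.comp_add_right 2)).fun_mul_left _

lemma dropWeight_nonneg {s : ℤ → ℤ} {j : ℤ} (h₁ : s (j + 1) ≤ s j) (h₂ : s (j + 2) ≤ s (j + 1)) :
    0 ≤ dropWeight s j := by
  unfold dropWeight
  nlinarith [Int.mul_sub_one_nonneg (s (j + 1) - s (j + 2)),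
    mul_nonneg (sub_nonneg.2 h₂) (sub_nonneg.2 h₁)]

lemma two_mul_finsum_mul_sub_eq_finsum_dropWeight {s : ℤ → ℤ} (hs : s.HasFiniteSupport) :
    2 * ∑ᶠ j, s j * (s (j + 1) - s (j + 2)) = ∑ᶠ j, dropWeight s j := by
  set φ : ℤ → ℤ := fun i ↦ s i ^ 2 + s i
  have hφ : φ.HasFiniteSupport := hs.fun_comp (g := fun x ↦ x ^ 2 + x) (by simp)
  calc 2 * ∑ᶠ j, s j * (s (j + 1) - s (j + 2))
      = ∑ᶠ j, (dropWeight s j + (φ (j + 1) - φ (j + 2))) := by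
        rw [mul_finsum' _ _ (hs.fun_mul_left _)]
        exact finsum_congr fun j ↦ by unfold dropWeight φ; ring
    _ = ∑ᶠ j, dropWeight s j := by
        rw [finsum_add_distrib (dropWeight_hasFiniteSupport hs)
          ((hφ.comp_add_right 1).fun_sub (hφ.comp_add_right 2)),
          finsum_comp_add_sub_comp_add hφ, add_zero]

namespace Castelnuovo

variable {s : ℤ → ℤ} {σ : ℤ}

lemma antitoneOn_Ici_sub_one (hσ1 : 1 ≤ σ) (hstair : ∀ i : ℤ, 0 ≤ i → i < σ → s i = i + 1)
    (hσs : s σ ≤ σ) (hanti : ∀ i : ℤ, σ ≤ i → s (i + 1) ≤ s i) :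
    AntitoneOn s (Set.Ici (σ - 1)) :=
  antitoneOn_Ici_of_succ_le fun i hi ↦ by
    rcases hi.eq_or_lt with rfl | hi
    · rw [sub_add_cancel, hstair (σ - 1) (by omega) (by omega), sub_add_cancel]
      exact hσs
    · exact hanti i (by omega)

lemma apply_ne_zero_of_le_one (hneg : ∀ i : ℤ, i < 0 → s i = 0) (hpos : ∀ i : ℤ, 0 ≤ s i)
    (hstair : ∀ i : ℤ, 0 ≤ i → i < σ → s i = i + 1) (hanti : AntitoneOn s (Set.Ici σ))
    (hn2 : 2 ≤ ∑ᶠ j, s j) (hσ : σ ≤ 1) : s σ ≠ 0 := fun h0 ↦ by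
  have hle : ∑ i ∈ Ico 0 σ, s i ≤ #(Ico 0 σ) • 1 := sum_le_card_nsmul _ _ _ fun i hi ↦ by
    rw [mem_Ico] at hi
    rw [hstair i hi.1 hi.2]
    omega
  rw [← finsum_eq_sum_Ico_of_antitoneOn hneg hpos hanti le_rfl h0, Int.card_Ico, nsmul_eq_mul,
    mul_one] at hle
  omega

lemma sum_Ico_dropWeight (hneg : ∀ i : ℤ, i < 0 → s i = 0) (hσ1 : 1 ≤ σ)
    (hstair : ∀ i : ℤ, 0 ≤ i → i < σ → s i = i + 1) :
    ∑ j ∈ Ico (-2) (σ - 1), dropWeight s j = 4 * σ - 2 + (σ - s σ) * (σ - s σ - 3) := by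
  have hlow : ∀ i, -1 ≤ i → i < σ → s i = i + 1 := fun i h₁ h₂ ↦ by
    rcases h₁.eq_or_lt with rfl | h₁
    · exact hneg (-1) (by norm_num)
    · exact hstair i (by omega) h₂
  have hfirst : dropWeight s (-2) = 2 := by
    rw [dropWeight, hneg (-2) (by norm_num), hlow (-2 + 1) (by norm_num) (by omega),
      hlow (-2 + 2) (by norm_num) (by omega)]
    norm_num
  have hmiddle : ∀ j ∈ Ico (-1) (σ - 2), dropWeight s j = 4 := fun j hj ↦ by
    rw [mem_Ico] at hj
    rw [dropWeight, hlow j (by omega) (by omega), hlow (j + 1) (by omega) (by omega),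
      hlow (j + 2) (by omega) (by omega)]
    ring
  have hlast : dropWeight s (σ - 2) = (σ - s σ) * (σ - s σ - 3) := by
    rw [dropWeight, hlow (σ - 2) (by omega) (by omega), hlow (σ - 2 + 1) (by omega) (by omega),
      show σ - 2 + 2 = σ by ring]
    ring
  have hsplit : Ico (-2) (σ - 1) = insert (-2) (insert (σ - 2) (Ico (-1) (σ - 2))) := by
    ext j
    simp only [mem_Ico, mem_insert]
    omega
  rw [hsplit, sum_insert (by simp only [mem_insert, mem_Ico]; omega),
    sum_insert (by simp only [mem_Ico]; omega), sum_congr rfl hmiddle, sum_const, Int.card_Ico,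
    nsmul_eq_mul, Int.toNat_of_nonneg (by omega), hfirst, hlast]
  ring

lemma le_two_mul_finsum (hs : s.HasFiniteSupport) (hneg : ∀ i : ℤ, i < 0 → s i = 0)
    (hσ1 : 1 ≤ σ) (hstair : ∀ i : ℤ, 0 ≤ i → i < σ → s i = i + 1)
    (hanti : AntitoneOn s (Set.Ici (σ - 1))) :
    4 * σ - 2 + (σ - s σ) * (σ - s σ - 3) ≤ 2 * ∑ᶠ j, s j * (s (j + 1) - s (j + 2)) := by
  rw [two_mul_finsum_mul_sub_eq_finsum_dropWeight hs, ← sum_Ico_dropWeight hneg hσ1 hstair]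
  refine sum_le_finsum (dropWeight_hasFiniteSupport hs) _ fun j hj ↦ ?_
  rw [mem_Ico, not_and_or, not_le, not_lt] at hj
  rcases hj with hj | hj
  · rw [dropWeight, hneg j (by omega), hneg (j + 1) (by omega), hneg (j + 2) (by omega)]
    norm_num
  · exact dropWeight_nonneg (hanti (Set.mem_Ici.2 hj) (Set.mem_Ici.2 (by omega)) (by omega))
      (hanti (Set.mem_Ici.2 (by omega)) (Set.mem_Ici.2 (by omega)) (by omega))

lemma firstDrop_eq_sub (hσ1 : 1 ≤ σ) (hstair : ∀ i : ℤ, 0 ≤ i → i < σ → s i = i + 1)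
    (hsσ : s σ < σ) {j₀ : ℤ} (hj₀ : σ - 2 ≤ j₀)
    (hj₀min : ∀ j : ℤ, σ - 2 ≤ j → j < j₀ → s (j + 1) = s (j + 2)) :
    s (j₀ + 1) - s (j₀ + 2) = σ - s σ := by
  have hσ2 : s (σ - 2 + 1) - s (σ - 2 + 2) = σ - s σ := by
    rw [show σ - 2 + 1 = σ - 1 by ring, show σ - 2 + 2 = σ by ring,
      hstair (σ - 1) (by omega) (by omega), sub_add_cancel]
  rcases hj₀.eq_or_lt with rfl | hlt
  · exact hσ2
  · have := hj₀min (σ - 2) le_rfl hlt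
    omega

lemma eq_ite_of_param_eq_one (hs : s.HasFiniteSupport) (hneg : ∀ i : ℤ, i < 0 → s i = 0)
    (hpos : ∀ i : ℤ, 0 ≤ s i) (hσ : σ = 1) (hstair : ∀ i : ℤ, 0 ≤ i → i < σ → s i = i + 1)
    (hσs : s σ ≤ σ) (hanti : ∀ i : ℤ, σ ≤ i → s (i + 1) ≤ s i) (j : ℤ) :
    s j = if 0 ≤ j ∧ j < ∑ᶠ i, s i then 1 else 0 := by
  have hanti₀ : AntitoneOn s (Set.Ici 0) := by
    simpa [hσ] using antitoneOn_Ici_sub_one hσ.ge hstair hσs hanti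
  refine eq_ite_of_antitoneOn_of_le_one hs hneg hpos (fun i ↦ ?_) hanti₀ j
  rcases lt_or_ge i 0 with hi | hi
  · rw [hneg i hi]
    norm_num
  · exact (hanti₀ Set.self_mem_Ici hi hi).trans (hstair 0 le_rfl (by omega)).le

end Castelnuovo

open Castelnuovo in
theorem castelnuovo_c_lower_bound_general
    (s : ℤ → ℤ)
    (hfin : (Function.support s).Finite) (hneg : ∀ i : ℤ, i < 0 → s i = 0)
    (hpos : ∀ i : ℤ, 0 ≤ s i)
    (σ : ℤ) (hstair : ∀ i : ℤ, 0 ≤ i → i < σ → s i = i + 1)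
    (hσs : s σ ≤ σ) (hanti : ∀ i : ℤ, σ ≤ i → s (i + 1) ≤ s i)
    (n : ℤ) (hn : n = ∑ᶠ j : ℤ, s j) (hn2 : 2 ≤ n)
    (c : ℤ) (hc : c = ∑ᶠ j : ℤ, s j * (s (j + 1) - s (j + 2)))
    (j₀ : ℤ) (hj₀ : σ - 2 ≤ j₀)
    (hj₀min : ∀ j : ℤ, σ - 2 ≤ j → j < j₀ → s (j + 1) = s (j + 2))
    (e₁ : ℤ) (he₁ : e₁ = s (j₀ + 1) - s (j₀ + 2))
    (δ : ℤ) (hδ : δ = if s σ < σ then 1 else 0) :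
    1 ≤ c ∧ 2 * σ - 1 - δ * e₁ ≤ c ∧
      (c = 1 ↔ ∀ j : ℤ, s j = if 0 ≤ j ∧ j < n then 1 else 0) := by
  have hsσ_ne_zero : σ ≤ 1 → s σ ≠ 0 :=
    apply_ne_zero_of_le_one hneg hpos hstair (antitoneOn_Ici_of_succ_le hanti) (hn ▸ hn2)
  have hσ1 : 1 ≤ σ := by
    by_contra hσ
    exact hsσ_ne_zero (by omega) (le_antisymm (by linarith [hpos σ]) (hpos σ))
  have hbound : 4 * σ - 2 + (σ - s σ) * (σ - s σ - 3) ≤ 2 * c :=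
    hc ▸ le_two_mul_finsum hfin hneg hσ1 hstair (antitoneOn_Ici_sub_one hσ1 hstair hσs hanti)
  have hc2 : 2 ≤ σ → 2 ≤ c := fun hσ ↦ by nlinarith [Int.mul_sub_one_nonneg (σ - s σ - 1)]
  have hdiag : s σ = σ → 2 * σ - 1 ≤ c := fun hsσ ↦ by
    rw [hsσ, sub_self, zero_mul, add_zero] at hbound
    omega
  refine ⟨?_, ?_, fun hc1 ↦ ?_, fun hs ↦ hc ▸ finsum_mul_sub_eq_one_of_eq_ite hn2 hs⟩
  · rcases hσ1.eq_or_lt with hσ | hσ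
    · linarith [hdiag (by have := hsσ_ne_zero hσ.ge; have := hpos σ; omega)]
    · linarith [hc2 hσ]
  · rcases hσs.eq_or_lt with hsσ | hsσ
    · rw [hδ, if_neg hsσ.not_lt, zero_mul, sub_zero]
      exact hdiag hsσ
    · rw [hδ, if_pos hsσ, one_mul, he₁, firstDrop_eq_sub hσ1 hstair hsσ hj₀ hj₀min]
      nlinarith [Int.mul_sub_one_nonneg (σ - s σ)]
  · have hσ : σ = 1 := by
      by_contra
      linarith [hc2 (by omega)]
    exact hn ▸ eq_ite_of_param_eq_one hfin hneg hpos hσ hstair hσs hanti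

/-- for a Castelnuovo polynomial `s` of weight `n ≥ 2` with parameter
`σ`, the quantity `c = ∑_j s_j (s_{j+1} - s_{j+2})` satisfies `c ≥ 1` and
`c ≥ 2σ - 1 - δ·e₁`, where `δ = 1` if `s σ < σ` and `δ = 0` otherwise, and `e₁`
is the first nonzero term of the sequence `(s_{j+1} - s_{j+2})_{j ≥ σ-2}`.
Moreover `c = 1` iff `s(t) = 1 + t + t² + ⋯ + t^{n-1}`. -/
theorem castelnuovo_c_lower_bound
    (s : ℤ → ℤ)
    (hfin : (Function.support s).Finite) (hneg : ∀ i : ℤ, i < 0 → s i = 0)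
    (hpos : ∀ i : ℤ, 0 ≤ s i)
    (σ : ℤ) (hσ0 : 0 ≤ σ) (hstair : ∀ i : ℤ, 0 ≤ i → i < σ → s i = i + 1)
    (hσs : s σ ≤ σ) (hanti : ∀ i : ℤ, σ ≤ i → s (i + 1) ≤ s i)
    (n : ℤ) (hn : n = ∑ᶠ j : ℤ, s j) (hn2 : 2 ≤ n)
    (c : ℤ) (hc : c = ∑ᶠ j : ℤ, s j * (s (j + 1) - s (j + 2)))
    (j₀ : ℤ) (hj₀ : σ - 2 ≤ j₀) (hj₀ne : s (j₀ + 1) ≠ s (j₀ + 2))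
    (hj₀min : ∀ j : ℤ, σ - 2 ≤ j → j < j₀ → s (j + 1) = s (j + 2))
    (e₁ : ℤ) (he₁ : e₁ = s (j₀ + 1) - s (j₀ + 2))
    (δ : ℤ) (hδ : δ = if s σ < σ then 1 else 0) :
    1 ≤ c ∧ 2 * σ - 1 - δ * e₁ ≤ c ∧
      (c = 1 ↔ ∀ j : ℤ, s j = if 0 ≤ j ∧ j < n then 1 else 0) :=
  castelnuovo_c_lower_bound_general s hfin hneg hpos σ hstair hσs hanti n hn hn2 c hc j₀ hj₀ hj₀min
    e₁ he₁ δ hδ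
end

section
/- For every n ≥ 1 there is a unique Castelnuovo polynomial of weight n maximizing c(s) = ∑_j s_j(s_{j-1} - s_{j-2}) among Castelnuovo polynomials of weight n, namely the one of the form s(t) = 1 + 2t + ... + (u-1)t^{u-2} + v t^{u-1} with 0 < v ≤ u-1 (staircase filled greedily), and for it c(s) = n - 1. -/
/-!
Write `Δ_j = s_{j-1} - s_{j-2}`. For a Castelnuovo function that follows `j + 1` below `σ` and
is non-increasing from `σ` on, `Δ_0 = 0`, `Δ_j = 1` for `1 ≤ j ≤ σ` and `Δ_j ≤ 0` for `j > σ`.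
Hence `n - c(s) = ∑_j s_j (1 - Δ_j) ≥ s_0 = 1`, with equality exactly when `s` vanishes beyond `σ`,
i.e. when `s` is the staircase `1, 2, …, σ, s_σ`. Among staircases the weight
`(1 + ⋯ + (u - 1)) + v` with `0 < v ≤ u` determines `u` and `v`.
-/

/-- A Castelnuovo function, indexed by `ℤ` (vanishing in negative degrees). -/
def IsCastelnuovo (s : ℤ → ℤ) : Prop :=
  (Function.support s).Finite ∧ (∀ i : ℤ, i < 0 → s i = 0) ∧ (∀ i : ℤ, 0 ≤ s i) ∧
  ∃ σ : ℤ, 0 ≤ σ ∧ (∀ i : ℤ, 0 ≤ i → i < σ → s i = i + 1) ∧ s σ ≤ σ ∧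
    ∀ i : ℤ, σ ≤ i → s (i + 1) ≤ s i

/-- The weight of a Castelnuovo function. -/
noncomputable def castWeight (s : ℤ → ℤ) : ℤ := ∑ᶠ j : ℤ, s j

/-- `c(s) = ∑_j s_j (s_{j-1} - s_{j-2})`. -/
noncomputable def castC (s : ℤ → ℤ) : ℤ := ∑ᶠ j : ℤ, s j * (s (j - 1) - s (j - 2))

open Function

structure IsCastelnuovoAt (s : ℤ → ℤ) (σ : ℤ) : Prop where
  finite_support : (support s).Finite
  eq_zero_of_neg : ∀ i, i < 0 → s i = 0
  nonneg : ∀ i, 0 ≤ s i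
  sigma_nonneg : 0 ≤ σ
  eq_add_one_of_lt : ∀ i, 0 ≤ i → i < σ → s i = i + 1
  apply_sigma_le : s σ ≤ σ
  succ_le_of_le : ∀ i, σ ≤ i → s (i + 1) ≤ s i

theorem isCastelnuovo_iff {s : ℤ → ℤ} : IsCastelnuovo s ↔ ∃ σ, IsCastelnuovoAt s σ := by
  constructor
  · rintro ⟨hfin, hneg, hpos, σ, hσ, hstair, hle, hmono⟩
    exact ⟨σ, hfin, hneg, hpos, hσ, hstair, hle, hmono⟩
  · rintro ⟨σ, hfin, hneg, hpos, hσ, hstair, hle, hmono⟩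
    exact ⟨hfin, hneg, hpos, σ, hσ, hstair, hle, hmono⟩

def castExcess (s : ℤ → ℤ) (j : ℤ) : ℤ := s j * (1 - (s (j - 1) - s (j - 2)))

theorem castWeight_sub_castC {s : ℤ → ℤ} (S : Finset ℤ) (hS : support s ⊆ S) :
    castWeight s - castC s = ∑ j ∈ S, castExcess s j := by
  have hS' : support (fun j => s j * (s (j - 1) - s (j - 2))) ⊆ S :=
    (support_mul_subset_left _ _).trans hS
  rw [castWeight, castC, finsum_eq_sum_of_support_subset _ hS,
    finsum_eq_sum_of_support_subset _ hS', ← Finset.sum_sub_distrib]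
  exact Finset.sum_congr rfl fun j _ => by unfold castExcess; ring

namespace IsCastelnuovoAt

variable {s : ℤ → ℤ} {σ j : ℤ}

theorem apply_sub_one (h : IsCastelnuovoAt s σ) (h0 : 0 ≤ j) (hj : j ≤ σ) : s (j - 1) = j := by
  rcases h0.eq_or_lt with rfl | hpos
  · exact h.eq_zero_of_neg _ (by norm_num)
  · rw [h.eq_add_one_of_lt _ (by omega) (by omega)]
    ring

theorem sub_eq_one (h : IsCastelnuovoAt s σ) (h1 : 1 ≤ j) (hj : j ≤ σ) :
    s (j - 1) - s (j - 2) = 1 := by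
  rw [h.apply_sub_one (by omega) hj, show j - 2 = j - 1 - 1 by ring,
    h.apply_sub_one (by omega) (by omega)]
  ring

theorem sub_nonpos (h : IsCastelnuovoAt s σ) (hj : σ < j) : s (j - 1) - s (j - 2) ≤ 0 := by
  rcases (show j = σ + 1 ∨ σ + 2 ≤ j by omega) with rfl | hj
  · rw [add_sub_cancel_right, show σ + 1 - 2 = σ - 1 by ring,
      h.apply_sub_one h.sigma_nonneg le_rfl]
    exact Int.sub_nonpos_of_le h.apply_sigma_le
  · have hmono := h.succ_le_of_le (j - 2) (by omega)
    rw [show j - 2 + 1 = j - 1 by ring] at hmono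
    omega

theorem castExcess_zero (h : IsCastelnuovoAt s σ) : castExcess s 0 = s 0 := by
  simp [castExcess, h.eq_zero_of_neg (-1) (by norm_num), h.eq_zero_of_neg (-2) (by norm_num)]

theorem castExcess_eq_zero_of_le (h : IsCastelnuovoAt s σ) (hj0 : j ≠ 0) (hj : j ≤ σ) :
    castExcess s j = 0 := by
  rcases hj0.lt_or_gt with hneg | hpos
  · simp [castExcess, h.eq_zero_of_neg j hneg]
  · simp [castExcess, h.sub_eq_one hpos hj]

theorem le_castExcess_of_lt (h : IsCastelnuovoAt s σ) (hj : σ < j) : s j ≤ castExcess s j :=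
  le_mul_of_one_le_right (h.nonneg j) (by linarith [h.sub_nonpos hj])

theorem castExcess_nonneg (h : IsCastelnuovoAt s σ) (hj0 : j ≠ 0) : 0 ≤ castExcess s j := by
  rcases le_or_gt j σ with hj | hj
  · exact (h.castExcess_eq_zero_of_le hj0 hj).ge
  · exact (h.nonneg j).trans (h.le_castExcess_of_lt hj)

theorem castExcess_eq_zero_iff (h : IsCastelnuovoAt s σ) (hj0 : j ≠ 0) :
    castExcess s j = 0 ↔ (σ < j → s j = 0) := by
  constructor
  · intro he hj
    linarith [h.le_castExcess_of_lt hj, h.nonneg j]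
  · intro hz
    rcases le_or_gt j σ with hj | hj
    · exact h.castExcess_eq_zero_of_le hj0 hj
    · simp [castExcess, hz hj]

theorem castWeight_sub_castC_eq (h : IsCastelnuovoAt s σ) :
    castWeight s - castC s = s 0 + ∑ j ∈ h.finite_support.toFinset.erase 0, castExcess s j := by
  rw [castWeight_sub_castC (insert 0 (h.finite_support.toFinset.erase 0)),
    Finset.sum_insert (Finset.notMem_erase 0 _), h.castExcess_zero]
  intro j hj
  by_cases hj0 : j = 0 <;> simp_all

theorem castC_le (h : IsCastelnuovoAt s σ) : castC s ≤ castWeight s - s 0 := by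
  have hsum := h.castWeight_sub_castC_eq
  have hnonneg : 0 ≤ ∑ j ∈ h.finite_support.toFinset.erase 0, castExcess s j :=
    Finset.sum_nonneg fun j hj => h.castExcess_nonneg (Finset.ne_of_mem_erase hj)
  linarith

theorem castC_eq_iff (h : IsCastelnuovoAt s σ) :
    castC s = castWeight s - s 0 ↔ ∀ j, σ < j → s j = 0 := by
  have hsum := h.castWeight_sub_castC_eq
  set T := h.finite_support.toFinset.erase 0
  calc castC s = castWeight s - s 0 ↔ ∑ j ∈ T, castExcess s j = 0 := by
        constructor <;> intro <;> linarith
    _ ↔ ∀ j ∈ T, castExcess s j = 0 :=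
        Finset.sum_eq_zero_iff_of_nonneg fun j hj => h.castExcess_nonneg (Finset.ne_of_mem_erase hj)
    _ ↔ ∀ j, σ < j → s j = 0 := by
        constructor
        · intro H j hj
          by_contra hne
          have hjT : j ∈ T := by simp [T, hne]; linarith [h.sigma_nonneg]
          exact hne ((h.castExcess_eq_zero_iff (Finset.ne_of_mem_erase hjT)).1 (H j hjT) hj)
        · exact fun H j hjT => (h.castExcess_eq_zero_iff (Finset.ne_of_mem_erase hjT)).2 (H j)

theorem eq_zero_of_le (h : IsCastelnuovoAt s σ) (h0 : s σ = 0) : ∀ j, σ ≤ j → s j = 0 := by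
  intro j hj
  induction j, hj using Int.leInduction with
  | base => exact h0
  | succ j hj ih => linarith [h.succ_le_of_le j hj, h.nonneg (j + 1)]

theorem one_le_sigma (h : IsCastelnuovoAt s σ) (hw : castWeight s ≠ 0) : 1 ≤ σ := by
  by_contra hσ
  obtain rfl : σ = 0 := by linarith [h.sigma_nonneg]
  have h0 : s 0 = 0 := le_antisymm h.apply_sigma_le (h.nonneg 0)
  have hs : s = 0 := funext fun j => by
    rcases lt_or_ge j 0 with hj | hj
    · exact h.eq_zero_of_neg j hj
    · exact h.eq_zero_of_le h0 j hj
  exact hw (by rw [castWeight, hs]; exact finsum_zero)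

theorem apply_zero (h : IsCastelnuovoAt s σ) (hw : castWeight s ≠ 0) : s 0 = 1 :=
  h.eq_add_one_of_lt 0 le_rfl (h.one_le_sigma hw)

end IsCastelnuovoAt

def staircase (u v : ℤ) : ℤ → ℤ := fun j =>
  if 0 ≤ j ∧ j < u - 1 then j + 1 else if j = u - 1 then v else 0

section Staircase

variable {u v j : ℤ}

theorem staircase_zero (hv : 0 < v) (hvu : v ≤ u) : staircase u v 0 = 1 := by
  unfold staircase; split_ifs <;> omega

theorem staircase_eq_zero_of_lt (hj : u - 1 < j) : staircase u v j = 0 := by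
  unfold staircase; split_ifs <;> omega

theorem staircase_add_one_zero (hu : 0 < u) : staircase (u + 1) 0 = staircase u u := by
  funext j; unfold staircase; split_ifs <;> omega

theorem support_staircase_subset (hu : 0 < u) : support (staircase u v) ⊆ Finset.Ico 0 u := by
  intro j hj
  rw [mem_support] at hj
  simp only [Finset.coe_Ico, Set.mem_Ico]
  unfold staircase at hj
  split_ifs at hj <;> omega

theorem isCastelnuovoAt_staircase (hv : 0 ≤ v) (hvu : v < u) :
    IsCastelnuovoAt (staircase u v) (u - 1) where
  finite_support := (Finset.Ico 0 u).finite_toSet.subset (support_staircase_subset (by omega))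
  eq_zero_of_neg i hi := by unfold staircase; split_ifs <;> omega
  nonneg i := by unfold staircase; split_ifs <;> omega
  sigma_nonneg := by omega
  eq_add_one_of_lt i hi0 hi := by unfold staircase; split_ifs <;> omega
  apply_sigma_le := by unfold staircase; split_ifs <;> omega
  succ_le_of_le i hi := by unfold staircase; split_ifs <;> omega

theorem exists_isCastelnuovoAt_staircase (hv : 0 < v) (hvu : v ≤ u) :
    ∃ σ, IsCastelnuovoAt (staircase u v) σ ∧ ∀ j, σ < j → staircase u v j = 0 := by
  rcases hvu.lt_or_eq with hlt | rfl
  · exact ⟨u - 1, isCastelnuovoAt_staircase hv.le hlt, fun j => staircase_eq_zero_of_lt⟩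
  · rw [← staircase_add_one_zero hv]
    have h := isCastelnuovoAt_staircase (u := v + 1) le_rfl (by omega)
    rw [add_sub_cancel_right] at h
    exact ⟨v, h, fun j hj => staircase_eq_zero_of_lt (by omega)⟩

theorem isCastelnuovo_staircase (hv : 0 < v) (hvu : v ≤ u) : IsCastelnuovo (staircase u v) :=
  isCastelnuovo_iff.2 ((exists_isCastelnuovoAt_staircase hv hvu).imp fun _ h => h.1)

theorem castC_staircase (hv : 0 < v) (hvu : v ≤ u) :
    castC (staircase u v) = castWeight (staircase u v) - 1 := by
  obtain ⟨σ, h, hz⟩ := exists_isCastelnuovoAt_staircase hv hvu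
  rw [h.castC_eq_iff.2 hz, staircase_zero hv hvu]

theorem two_mul_sum_Ico_add_one {m : ℤ} (hm : 0 ≤ m) :
    2 * ∑ j ∈ Finset.Ico 0 m, (j + 1) = m * (m + 1) := by
  induction m, hm using Int.leInduction with
  | base => simp
  | succ m hm ih =>
    rw [Finset.Ico_add_one_right_eq_Icc, ← Finset.Ico_insert_right hm,
      Finset.sum_insert Finset.right_notMem_Ico]
    linear_combination ih

theorem two_mul_castWeight_staircase (hu : 0 < u) :
    2 * castWeight (staircase u v) = (u - 1) * u + 2 * v := by
  have hIco : Finset.Ico 0 u = insert (u - 1) (Finset.Ico 0 (u - 1)) := by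
    rw [Finset.Ico_insert_right (by omega : (0 : ℤ) ≤ u - 1),
      ← Finset.Ico_add_one_right_eq_Icc, sub_add_cancel]
  have hlow : ∑ j ∈ Finset.Ico 0 (u - 1), staircase u v j = ∑ j ∈ Finset.Ico 0 (u - 1), (j + 1) :=
    Finset.sum_congr rfl fun j hj => by
      rw [Finset.mem_Ico] at hj
      unfold staircase; split_ifs <;> omega
  have htop : staircase u v (u - 1) = v := by unfold staircase; split_ifs <;> omega
  rw [castWeight, finsum_eq_sum_of_support_subset _ (support_staircase_subset hu), hIco,
    Finset.sum_insert Finset.right_notMem_Ico, htop, hlow]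
  linear_combination two_mul_sum_Ico_add_one (show 0 ≤ u - 1 by omega)

end Staircase

theorem IsCastelnuovoAt.eq_staircase {s : ℤ → ℤ} {σ : ℤ} (h : IsCastelnuovoAt s σ)
    (hz : ∀ j, σ < j → s j = 0) : s = staircase (σ + 1) (s σ) := by
  funext j
  unfold staircase
  split_ifs with hlt heq
  · exact h.eq_add_one_of_lt j hlt.1 (by omega)
  · rw [heq, add_sub_cancel_right]
  · rcases lt_or_ge j 0 with hneg | hnonneg
    · exact h.eq_zero_of_neg j hneg
    · exact hz j (by omega)

namespace IsCastelnuovo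

variable {s : ℤ → ℤ}

theorem castC_le (hs : IsCastelnuovo s) (hw : castWeight s ≠ 0) :
    castC s ≤ castWeight s - 1 := by
  obtain ⟨σ, h⟩ := isCastelnuovo_iff.1 hs
  simpa [h.apply_zero hw] using h.castC_le

theorem exists_eq_staircase (hs : IsCastelnuovo s) (hw : castWeight s ≠ 0)
    (hc : castC s = castWeight s - 1) : ∃ u v, 0 < v ∧ v ≤ u ∧ s = staircase u v := by
  obtain ⟨σ, h⟩ := isCastelnuovo_iff.1 hs
  have hσ := h.one_le_sigma hw
  have hs := h.eq_staircase (h.castC_eq_iff.1 (by rw [h.apply_zero hw]; exact hc))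
  rcases (h.nonneg σ).eq_or_lt with h0 | hpos
  · exact ⟨σ, σ, hσ, le_rfl, by rw [hs, ← h0, staircase_add_one_zero hσ]⟩
  · exact ⟨σ + 1, s σ, hpos, by linarith [h.apply_sigma_le], hs⟩

end IsCastelnuovo

theorem exists_triangle_decomposition {n : ℤ} (hn : 1 ≤ n) :
    ∃ u v : ℤ, 0 < v ∧ v ≤ u ∧ (u - 1) * u + 2 * v = 2 * n := by
  induction n, hn using Int.leInduction with
  | base => exact ⟨1, 1, by norm_num⟩
  | succ n hn ih =>
    obtain ⟨u, v, hv, hvu, hsum⟩ := ih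
    rcases hvu.lt_or_eq with hlt | rfl
    · exact ⟨u, v + 1, by omega, by omega, by linarith⟩
    · exact ⟨v + 1, 1, by omega, by omega, by linarith⟩

theorem triangle_decomposition_unique {u v u' v' : ℤ} (hv : 0 < v) (hvu : v ≤ u) (hv' : 0 < v')
    (hvu' : v' ≤ u') (h : (u - 1) * u + 2 * v = (u' - 1) * u' + 2 * v') : u = u' ∧ v = v' := by
  have hmono : ∀ a b c d : ℤ, 0 < b → b ≤ a → 0 < d → a < c →
      (a - 1) * a + 2 * b < (c - 1) * c + 2 * d := fun a b c d hb hba hd hac => by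
    nlinarith [mul_le_mul (show a ≤ c - 1 by omega) (show a + 1 ≤ c by omega) (by omega) (by omega)]
  obtain rfl : u = u' := by
    rcases lt_trichotomy u u' with hlt | heq | hgt
    · exact absurd h (hmono u v u' v' hv hvu hv' hlt).ne
    · exact heq
    · exact absurd h (hmono u' v' u v hv' hvu' hv hgt).ne'
  exact ⟨rfl, by linarith⟩

theorem exists_castWeight_staircase_eq {n : ℤ} (hn : 1 ≤ n) :
    ∃ u v, 0 < v ∧ v ≤ u ∧ castWeight (staircase u v) = n := by
  obtain ⟨u, v, hv, hvu, hsum⟩ := exists_triangle_decomposition hn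
  exact ⟨u, v, hv, hvu, by linarith [two_mul_castWeight_staircase (v := v) (by omega : 0 < u)]⟩

theorem staircase_eq_of_castWeight_eq {u v u' v' : ℤ} (hv : 0 < v) (hvu : v ≤ u) (hv' : 0 < v')
    (hvu' : v' ≤ u') (h : castWeight (staircase u v) = castWeight (staircase u' v')) :
    staircase u v = staircase u' v' := by
  obtain ⟨rfl, rfl⟩ := triangle_decomposition_unique hv hvu hv' hvu' (by
    rw [← two_mul_castWeight_staircase (by omega), ← two_mul_castWeight_staircase (by omega), h])
  rfl

/-- for every `n ≥ 1` there is a unique Castelnuovo polynomial of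
weight `n` maximizing `c(s) = ∑_j s_j (s_{j-1} - s_{j-2})`, namely the greedily
filled staircase `s(t) = 1 + 2t + ⋯ + (u-1)t^{u-2} + v t^{u-1}` (with `0 < v ≤ u`),
and for it `c(s) = n - 1`. -/
theorem castelnuovo_unique_maximizer (n : ℤ) (hn : 1 ≤ n) :
    (∃! s : ℤ → ℤ, IsCastelnuovo s ∧ castWeight s = n ∧
        ∀ s' : ℤ → ℤ, IsCastelnuovo s' → castWeight s' = n → castC s' ≤ castC s) ∧
    (∀ s : ℤ → ℤ, IsCastelnuovo s → castWeight s = n →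
      (∀ s' : ℤ → ℤ, IsCastelnuovo s' → castWeight s' = n → castC s' ≤ castC s) →
      castC s = n - 1 ∧
        ∃ u v : ℤ, 0 < u ∧ 0 < v ∧ v ≤ u ∧
          ∀ j : ℤ, s j =
            if 0 ≤ j ∧ j < u - 1 then j + 1 else if j = u - 1 then v else 0) := by
  obtain ⟨u, v, hv, hvu, hGw⟩ := exists_castWeight_staircase_eq hn
  have hG := isCastelnuovo_staircase hv hvu
  have hGc : castC (staircase u v) = n - 1 := by rw [castC_staircase hv hvu, hGw]
  have hmax : ∀ s, IsCastelnuovo s → castWeight s = n → castC s ≤ n - 1 :=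
    fun s hs hw => hw ▸ hs.castC_le (by omega)
  have huniq : ∀ s, IsCastelnuovo s → castWeight s = n → n - 1 ≤ castC s →
      s = staircase u v := by
    intro s hs hw hc
    obtain ⟨u', v', hv', hvu', rfl⟩ :=
      hs.exists_eq_staircase (by omega) (by linarith [hmax _ hs hw])
    exact staircase_eq_of_castWeight_eq hv' hvu' hv hvu (hw.trans hGw.symm)
  refine ⟨⟨staircase u v, ⟨hG, hGw, fun s hs hw => hGc ▸ hmax s hs hw⟩,
    fun s ⟨hs, hw, hsmax⟩ => huniq s hs hw (hGc ▸ hsmax _ hG hGw)⟩, fun s hs hw hsmax => ?_⟩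
  have hs_eq := huniq s hs hw (hGc ▸ hsmax _ hG hGw)
  exact ⟨hs_eq ▸ hGc, u, v, by omega, hv, hvu, fun j => by rw [hs_eq]; rfl⟩
end

section
/- Let A be a quantum polynomial ring in three variables and M a torsion free graded right A-module of projective dimension one with minimal resolution 0 → ⊕_i A(-i)^{b_i} → ⊕_i A(-i)^{a_i} → M → 0. Then for all l, ∑_{i≤l} b_i < ∑_{i<l} a_i whenever ∑_{i<l} a_i > 0; in particular, with σ the lowest index with a_σ ≠ 0, one has b_i = 0 for i ≤ σ. -/
set_option linter.unusedSectionVars false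
set_option linter.unusedVariables false
set_option maxHeartbeats 2000000

open Module

open Module

section Aux
variable {k A : Type} [Field k] [Ring A] [Algebra k A] {ι : Type} [DecidableEq ι]

/-- The submodule of finitely supported functions with entries in prescribed submodules. -/
def rowSpace (N : ι → Submodule k A) : Submodule k (ι →₀ A) where
  carrier := {g | ∀ y, g y ∈ N y}
  add_mem' := fun {g} {h} hg hh y => by
    rw [Finsupp.add_apply]; exact add_mem (hg y) (hh y)
  zero_mem' := fun y => by rw [Finsupp.zero_apply]; exact zero_mem _
  smul_mem' := fun c g hg y => by
    rw [Finsupp.smul_apply]; exact Submodule.smul_mem _ c (hg y)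

lemma mem_rowSpace {N : ι → Submodule k A} {g : ι →₀ A} :
    g ∈ rowSpace N ↔ ∀ y, g y ∈ N y := Iff.rfl

lemma rowSpace_bound (N : ι → Submodule k A) {J : Type} [Fintype J] (e : J → ι)
    (h0 : ∀ y, y ∉ Set.range e → N y = ⊥) (hfd : ∀ j, FiniteDimensional k (N (e j))) :
    Module.Finite k (rowSpace N) ∧
      finrank k (rowSpace N) ≤ ∑ j, finrank k (N (e j)) := by
  haveI := hfd
  let res : rowSpace N →ₗ[k] Π j, N (e j) :=
    { toFun := fun g j => ⟨(g : ι →₀ A) (e j), g.2 (e j)⟩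
      map_add' := fun g h => by funext j; apply Subtype.ext; simp
      map_smul' := fun c g => by funext j; apply Subtype.ext; simp }
  have hres : Function.Injective res := by
    intro g h hgh
    apply Subtype.ext; apply Finsupp.ext; intro y
    by_cases hy : y ∈ Set.range e
    · obtain ⟨j, rfl⟩ := hy
      exact congrArg Subtype.val (congrFun hgh j)
    · have hb := h0 y hy
      have h1 := g.2 y; have h2 := h.2 y
      rw [hb, Submodule.mem_bot] at h1 h2
      rw [h1, h2]
  have hfin : Module.Finite k (rowSpace N) := Module.Finite.of_injective res hres
  refine ⟨hfin, ?_⟩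
  rw [← Module.finrank_pi_fintype k]
  exact LinearMap.finrank_le_finrank_of_injective hres

/-- embedding of a finite product of submodules of `A` into `ι →₀ A`. -/
noncomputable def embMap (N : J → Submodule k A) (e : J → ι) [Fintype J] :
    (Π j, N j) →ₗ[k] (ι →₀ A) :=
  ∑ j, Finsupp.lsingle (e j) ∘ₗ ((N j).subtype ∘ₗ LinearMap.proj j)

lemma embMap_apply {J : Type} [Fintype J] (N : J → Submodule k A) (e : J → ι)
    (g : Π j, N j) (y : ι) :
    embMap N e g y = ∑ j, Finsupp.single (e j) ((g j : A)) y := by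
  rw [embMap, LinearMap.sum_apply, Finsupp.finset_sum_apply]
  rfl

lemma embMap_apply_of_ne {J : Type} [Fintype J] (N : J → Submodule k A) (e : J → ι)
    (g : Π j, N j) (y : ι) (h : ∀ j, e j ≠ y) : embMap N e g y = 0 := by
  rw [embMap_apply]
  exact Finset.sum_eq_zero fun j _ => Finsupp.single_eq_of_ne' (h j)

lemma embMap_apply_eq {J : Type} [Fintype J] (N : J → Submodule k A) (e : J → ι)
    (he : Function.Injective e) (g : Π j, N j) (j0 : J) :
    embMap N e g (e j0) = g j0 := by
  rw [embMap_apply]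
  rw [Finset.sum_eq_single j0]
  · exact Finsupp.single_eq_same
  · intro j _ hj
    exact Finsupp.single_eq_of_ne' (fun hc => hj (he hc))
  · intro h; exact absurd (Finset.mem_univ j0) h

lemma embMap_injective {J : Type} [Fintype J] (N : J → Submodule k A) (e : J → ι)
    (he : Function.Injective e) : Function.Injective (embMap N e) := by
  intro g g' h
  funext j
  apply Subtype.ext
  have := congrFun (congrArg (fun (f : ι →₀ A) => (f : ι → A)) h) (e j)
  simpa [embMap_apply_eq N e he] using this

end Aux


section Graded
variable {k A : Type} [Field k] [Ring A] [Algebra k A]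
variable (𝒜 : ℤ → Submodule k A) [GradedRing 𝒜]

lemma proj_zero_mul_of_pos (hneg : ∀ n : ℤ, n < 0 → 𝒜 n = ⊥)
    {t : A} {j : ℤ} (hj : 0 < j) (ht : t ∈ 𝒜 j) (r : A) :
    GradedRing.proj 𝒜 0 (r * t) = 0 := by
  refine DirectSum.Decomposition.inductionOn 𝒜 (motive := fun r => GradedRing.proj 𝒜 0 (r * t) = 0)
    ?_ ?_ ?_ r
  · show GradedRing.proj 𝒜 0 ((0:A) * t) = 0
    rw [zero_mul, map_zero]
  · rintro i ⟨m, hm⟩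
    show GradedRing.proj 𝒜 0 (m * t) = 0
    by_cases hij : i + j = 0
    · have hi : i < 0 := by omega
      rw [hneg i hi, Submodule.mem_bot] at hm
      simp [hm]
    · have hmem : m * t ∈ 𝒜 (i + j) := SetLike.mul_mem_graded hm ht
      rw [GradedRing.proj_apply, DirectSum.decompose_of_mem_ne 𝒜 hmem hij]
  · intro x y hx hy
    show GradedRing.proj 𝒜 0 ((x + y) * t) = 0
    rw [add_mul, map_add, hx, hy, add_zero]

lemma proj_zero_one : GradedRing.proj 𝒜 0 (1 : A) = 1 := by
  rw [GradedRing.proj_apply, DirectSum.decompose_of_mem_same 𝒜 (SetLike.one_mem_graded 𝒜)]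

end Graded


def Jty (c : ℤ → ℕ) (S : Finset ℤ) : Type := (i : {i : ℤ // i ∈ S}) × Fin (c i.1)

noncomputable instance (c : ℤ → ℕ) (S : Finset ℤ) : Fintype (Jty c S) := by
  unfold Jty; infer_instance

def eJ (c : ℤ → ℕ) (S : Finset ℤ) : Jty c S → (Σ i : ℤ, Fin (c i)) := fun j => ⟨j.1.1, j.2⟩

lemma eJ_injective (c : ℤ → ℕ) (S : Finset ℤ) : Function.Injective (eJ c S) := by
  rintro ⟨⟨i1, hi1⟩, v1⟩ ⟨⟨i2, hi2⟩, v2⟩ h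
  simp only [eJ, Sigma.mk.inj_iff] at h
  obtain ⟨rfl, hv⟩ := h
  have := eq_of_heq hv
  subst this
  rfl

lemma eJ_fst (c : ℤ → ℕ) (S : Finset ℤ) (j : Jty c S) : (eJ c S j).1 = j.1.1 := rfl

lemma eJ_mem (c : ℤ → ℕ) (S : Finset ℤ) (j : Jty c S) : (eJ c S j).1 ∈ S := j.1.2

lemma eJ_range (c : ℤ → ℕ) (S : Finset ℤ) {y : Σ i : ℤ, Fin (c i)} (hy : y.1 ∈ S) :
    y ∈ Set.range (eJ c S) := ⟨⟨⟨y.1, hy⟩, y.2⟩, rfl⟩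

lemma Jty_sum (c : ℤ → ℕ) (S : Finset ℤ) {M : Type} [AddCommMonoid M] (f : ℤ → M) :
    ∑ j : Jty c S, f j.1.1 = ∑ i ∈ S, c i • f i := by
  show ∑ j : ((i : {i : ℤ // i ∈ S}) × Fin (c i.1)), f j.1.1 = _
  rw [← Finset.univ_sigma_univ, Finset.sum_sigma]
  simp only [Finset.sum_const, Finset.card_univ, Fintype.card_fin]
  exact Finset.sum_coe_sort S (fun i => c i • f i)

theorem part1_aux
    (k : Type) [Field k] (A : Type) [Ring A] [Algebra k A]
    [IsDomain A]
    (𝒜 : ℤ → Submodule k A) [GradedRing 𝒜]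
    (hdim : ∀ n : ℤ, 0 ≤ n → (finrank k (𝒜 n) : ℤ) = (n + 1) * (n + 2) / 2)
    (a b : ℤ → ℕ)
    (T : (Σ i : ℤ, Fin (a i)) → (Σ i : ℤ, Fin (b i)) → A)
    (hhom : ∀ y x, T y x ∈ 𝒜 (x.1 - y.1))
    (hmin : ∀ y x, x.1 - y.1 ≤ 0 → T y x = 0)
    (φ : ((Σ i : ℤ, Fin (b i)) →₀ A) →ₗ[A] ((Σ i : ℤ, Fin (a i)) →₀ A))
    (hφ : ∀ (f : (Σ i : ℤ, Fin (b i)) →₀ A) (y : Σ i : ℤ, Fin (a i)),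
      φ f y = ∑ᶠ x : (Σ i : ℤ, Fin (b i)), f x * T y x)
    (hinj : Function.Injective φ)
    (hkey : ∀ (y0 : Σ i : ℤ, Fin (a i)) (s : A),
        Finsupp.single y0 s ∈ LinearMap.range φ → s = 0)
    (l : ℤ) (Saf Sbf : Finset ℤ)
    (hSaf : ∀ i ∈ Saf, i < l ∧ 0 < a i) (hSaf' : ∀ i, i < l → a i ≠ 0 → i ∈ Saf)
    (hSbf : ∀ i ∈ Sbf, i ≤ l) (hSbf' : ∀ i, i ≤ l → b i ≠ 0 → i ∈ Sbf)
    (hpos : 0 < ∑ i ∈ Saf, (a i : ℤ))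
    (hcon : ∑ i ∈ Saf, (a i : ℤ) ≤ ∑ i ∈ Sbf, (b i : ℤ)) : False := by
  classical
  set Na : ℤ := ∑ i ∈ Saf, (a i : ℤ) with hNadef
  set Nb : ℤ := ∑ i ∈ Sbf, (b i : ℤ) with hNbdef
  have hSafne : Saf.Nonempty := by
    by_contra h
    rw [Finset.not_nonempty_iff_eq_empty] at h
    rw [hNadef, h, Finset.sum_empty] at hpos
    exact lt_irrefl 0 hpos
  set i0 := Saf.min' hSafne with hi0def
  have hi0mem : i0 ∈ Saf := Finset.min'_mem _ _
  obtain ⟨hi0l, hai0⟩ := hSaf i0 hi0mem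
  set e : ℤ := l - i0 with hedef
  have he1 : 1 ≤ e := by omega
  have hNa1 : 1 ≤ Na := hpos
  set D : ℤ := 2*Na*e + Na*e*(e+3) with hDdef
  have hNae : 0 < Na*e := mul_pos (by omega) (by omega)
  have hD0 : 0 ≤ D := by nlinarith
  set d : ℤ := l + D with hddef
  -- dimension facts
  have hq2 : ∀ n : ℤ, 0 ≤ n → 2 * (finrank k (𝒜 n) : ℤ) = (n+1)*(n+2) := by
    intro n hn
    have h2 : (2:ℤ) ∣ (n+1)*(n+2) := by
      have h3 : Even ((n+1)*((n+1)+1)) := Int.even_mul_succ_self (n+1)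
      have h4 : (n+1)*(n+2) = (n+1)*((n+1)+1) := by ring
      rw [h4]
      exact h3.two_dvd
    rw [hdim n hn]
    exact Int.mul_ediv_cancel' h2
  have hfd : ∀ n : ℤ, 0 ≤ n → FiniteDimensional k (𝒜 n) := by
    intro n hn
    have h2 := hq2 n hn
    have h3 : 0 < (finrank k (𝒜 n) : ℤ) := by nlinarith
    exact Module.finite_of_finrank_pos (by exact_mod_cast h3)
  have hqmono : ∀ m n : ℤ, 0 ≤ m → m ≤ n →
      (finrank k (𝒜 m) : ℤ) ≤ (finrank k (𝒜 n) : ℤ) := by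
    intro m n hm hmn
    have h1 := hq2 m hm
    have h2 := hq2 n (le_trans hm hmn)
    nlinarith
  -- the row space
  set Nrow : (Σ i : ℤ, Fin (a i)) → Submodule k A :=
    fun y => if y.1 < l then 𝒜 (d - y.1) else ⊥ with hNrowdef
  have h0a : ∀ y, y ∉ Set.range (eJ a Saf) → Nrow y = ⊥ := by
    intro y hy
    by_cases hyl : y.1 < l
    · exact absurd (eJ_range a Saf (hSaf' y.1 hyl (Fin.pos y.2).ne')) hy
    · simp only [hNrowdef, if_neg hyl]
  have hfda : ∀ j : Jty a Saf, FiniteDimensional k (Nrow (eJ a Saf j)) := by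
    intro j
    have h1 : (eJ a Saf j).1 < l := (hSaf _ (eJ_mem a Saf j)).1
    have h2 : Nrow (eJ a Saf j) = 𝒜 (d - (eJ a Saf j).1) := by
      simp only [hNrowdef]
      rw [if_pos h1]
    rw [h2]
    exact hfd _ (by omega)
  obtain ⟨hVfin, hVle⟩ := rowSpace_bound Nrow (eJ a Saf) h0a hfda
  have hsum_a : (∑ j : Jty a Saf, finrank k (Nrow (eJ a Saf j)))
      = ∑ i ∈ Saf, a i * finrank k (𝒜 (d - i)) := by
    have h1 : ∀ j : Jty a Saf, finrank k (Nrow (eJ a Saf j)) = finrank k (𝒜 (d - j.1.1)) := by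
      intro j
      have h2 : (eJ a Saf j).1 < l := (hSaf _ (eJ_mem a Saf j)).1
      have h3 : Nrow (eJ a Saf j) = 𝒜 (d - (eJ a Saf j).1) := by
        simp only [hNrowdef]
        rw [if_pos h2]
      rw [h3]
      rfl
    rw [Finset.sum_congr rfl (fun j _ => h1 j)]
    rw [Jty_sum a Saf (fun i => finrank k (𝒜 (d - i)))]
    simp [smul_eq_mul]
  -- now the source space and the map Θ
  set y0 : (Σ i : ℤ, Fin (a i)) := ⟨i0, ⟨0, hai0⟩⟩ with hy0def
  set NB : Jty b Sbf → Submodule k A := fun j => 𝒜 (d - j.1.1) with hNBdef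
  have heb : Function.Injective (eJ b Sbf) := eJ_injective b Sbf
  set emb := embMap NB (eJ b Sbf) with hembdef
  have hw1 : ∀ (g : Π j, NB j) (x : Σ i : ℤ, Fin (b i)), emb g x ∈ 𝒜 (d - x.1) := by
    intro g x
    by_cases hx : x ∈ Set.range (eJ b Sbf)
    · obtain ⟨j, rfl⟩ := hx
      rw [hembdef, embMap_apply_eq NB (eJ b Sbf) heb g j]
      exact (g j).2
    · rw [hembdef, embMap_apply_of_ne NB (eJ b Sbf) g x (fun j hj => hx ⟨j, hj⟩)]
      exact zero_mem _
  have hw0 : ∀ (g : Π j, NB j) (x : Σ i : ℤ, Fin (b i)), ¬ x.1 ≤ l → emb g x = 0 := by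
    intro g x hx
    rw [hembdef]
    apply embMap_apply_of_ne
    intro j hj
    apply hx
    rw [← hj]
    exact hSbf _ (eJ_mem b Sbf j)
  set Θ : ((𝒜 (d - i0)) × (Π j : Jty b Sbf, NB j)) →ₗ[k] ((Σ i : ℤ, Fin (a i)) →₀ A) :=
    ((Finsupp.lsingle y0 : A →ₗ[k] ((Σ i : ℤ, Fin (a i)) →₀ A)) ∘ₗ (𝒜 (d - i0)).subtype) ∘ₗ
        LinearMap.fst k _ _
      + ((φ.restrictScalars k) ∘ₗ emb) ∘ₗ LinearMap.snd k _ _ with hΘdef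
  have hΘapp : ∀ z, Θ z = Finsupp.single y0 ((z.1 : A)) + φ (emb z.2) := by
    intro z
    rfl
  have hsingle_mem : ∀ r : 𝒜 (d - i0), Finsupp.single y0 ((r : A)) ∈ rowSpace Nrow := by
    intro r
    rw [mem_rowSpace]
    intro y
    by_cases hy : y0 = y
    · rw [← hy, Finsupp.single_eq_same]
      have h1 : Nrow y0 = 𝒜 (d - i0) := by
        simp only [hNrowdef]
        rw [if_pos (show y0.1 < l from hi0l)]
      rw [h1]
      exact r.2
    · rw [Finsupp.single_eq_of_ne' hy]
      exact zero_mem _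
  have hφw_mem : ∀ w : ((Σ i : ℤ, Fin (b i)) →₀ A),
      (∀ x, w x ∈ 𝒜 (d - x.1)) → (∀ x, ¬ x.1 ≤ l → w x = 0) → φ w ∈ rowSpace Nrow := by
    intro w h1 h2
    rw [mem_rowSpace]
    intro y
    rw [hφ]
    have hsupp : (Function.support fun x => w x * T y x) ⊆ ↑w.support := by
      intro x hx
      simp only [Function.mem_support] at hx
      rw [Finset.mem_coe, Finsupp.mem_support_iff]
      intro h3
      rw [h3, zero_mul] at hx
      exact hx rfl
    rw [finsum_eq_sum_of_support_subset _ hsupp]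
    by_cases hy : y.1 < l
    · have h4 : Nrow y = 𝒜 (d - y.1) := by
        simp only [hNrowdef]
        rw [if_pos hy]
      rw [h4]
      apply Submodule.sum_mem
      intro x _
      have h5 := SetLike.mul_mem_graded (h1 x) (hhom y x)
      have h6 : (d - x.1) + (x.1 - y.1) = d - y.1 := by ring
      rw [h6] at h5
      exact h5
    · have h4 : Nrow y = ⊥ := by
        simp only [hNrowdef]
        rw [if_neg hy]
      rw [h4, Submodule.mem_bot]
      apply Finset.sum_eq_zero
      intro x _
      by_cases hxl : x.1 ≤ l
      · rw [hmin y x (by omega), mul_zero]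
      · rw [h2 x hxl, zero_mul]
  have hΘmem : ∀ z, Θ z ∈ rowSpace Nrow := by
    intro z
    rw [hΘapp]
    exact add_mem (hsingle_mem z.1) (hφw_mem (emb z.2) (hw1 z.2) (hw0 z.2))
  have hΘinj : Function.Injective Θ := by
    rw [injective_iff_map_eq_zero]
    intro z hz
    rw [hΘapp] at hz
    have h1 : Finsupp.single y0 ((z.1 : A)) = φ (- emb z.2) := by
      rw [map_neg]
      exact eq_neg_of_add_eq_zero_left hz
    have h2 : (z.1 : A) = 0 := hkey y0 _ ⟨- emb z.2, h1.symm⟩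
    have h3 : φ (emb z.2) = 0 := by
      rw [h2, Finsupp.single_zero, zero_add] at hz
      exact hz
    have h4 : emb z.2 = 0 := hinj (by rw [h3, map_zero])
    have h5 : z.2 = 0 := by
      apply embMap_injective NB (eJ b Sbf) heb
      rw [map_zero, ← hembdef]
      exact h4
    exact Prod.ext (Subtype.ext h2) h5
  haveI hfdi0 : FiniteDimensional k (𝒜 (d - i0)) := hfd _ (by omega)
  haveI hfdb : ∀ j : Jty b Sbf, FiniteDimensional k (NB j) := by
    intro j
    have h1 : (eJ b Sbf j).1 ≤ l := hSbf _ (eJ_mem b Sbf j)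
    have h2 : j.1.1 ≤ l := h1
    exact hfd (d - j.1.1) (by omega)
  haveI := hVfin
  have hXle : finrank k ((𝒜 (d - i0)) × (Π j : Jty b Sbf, NB j)) ≤ finrank k (rowSpace Nrow) := by
    have hinjc : Function.Injective (Θ.codRestrict (rowSpace Nrow) hΘmem) := by
      intro z z' hzz
      apply hΘinj
      exact congrArg Subtype.val hzz
    exact LinearMap.finrank_le_finrank_of_injective hinjc
  have hsum_b : (∑ j : Jty b Sbf, finrank k (NB j)) = ∑ i ∈ Sbf, b i * finrank k (𝒜 (d - i)) := by
    have h1 : ∀ j : Jty b Sbf, finrank k (NB j) = finrank k (𝒜 (d - j.1.1)) := by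
      intro j
      rfl
    rw [Finset.sum_congr rfl (fun j _ => h1 j)]
    rw [Jty_sum b Sbf (fun i => finrank k (𝒜 (d - i)))]
    simp [smul_eq_mul]
  have hXrank : finrank k ((𝒜 (d - i0)) × (Π j : Jty b Sbf, NB j))
      = finrank k (𝒜 (d - i0)) + ∑ i ∈ Sbf, b i * finrank k (𝒜 (d - i)) := by
    rw [Module.finrank_prod, Module.finrank_pi_fintype, hsum_b]
  -- put the numbers together, in ℤ
  have hmainN : finrank k (𝒜 (d - i0)) + ∑ i ∈ Sbf, b i * finrank k (𝒜 (d - i))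
      ≤ ∑ i ∈ Saf, a i * finrank k (𝒜 (d - i)) := by
    rw [← hXrank, ← hsum_a]
    exact le_trans hXle hVle
  have hmain : (finrank k (𝒜 (d - i0)) : ℤ)
        + ∑ i ∈ Sbf, (b i : ℤ) * (finrank k (𝒜 (d - i)) : ℤ)
      ≤ ∑ i ∈ Saf, (a i : ℤ) * (finrank k (𝒜 (d - i)) : ℤ) := by
    exact_mod_cast hmainN
  have hbound1 : ∑ i ∈ Saf, (a i : ℤ) * (finrank k (𝒜 (d - i)) : ℤ)
      ≤ Na * (finrank k (𝒜 (d - i0)) : ℤ) := by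
    rw [hNadef, Finset.sum_mul]
    apply Finset.sum_le_sum
    intro i hi
    have h1 : i0 ≤ i := Finset.min'_le _ _ hi
    have h2 : i < l := (hSaf i hi).1
    have h3 := hqmono (d - i) (d - i0) (by omega) (by omega)
    exact mul_le_mul_of_nonneg_left h3 (Int.natCast_nonneg _)
  have hbound2 : Nb * (finrank k (𝒜 (d - l)) : ℤ)
      ≤ ∑ i ∈ Sbf, (b i : ℤ) * (finrank k (𝒜 (d - i)) : ℤ) := by
    rw [hNbdef, Finset.sum_mul]
    apply Finset.sum_le_sum
    intro i hi
    have h2 : i ≤ l := hSbf i hi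
    have h3 := hqmono (d - l) (d - i) (by omega) (by omega)
    exact mul_le_mul_of_nonneg_left h3 (Int.natCast_nonneg _)
  have hq00 : (0:ℤ) ≤ (finrank k (𝒜 (d - l)) : ℤ) := Int.natCast_nonneg _
  set Q1 : ℤ := (finrank k (𝒜 (d - i0)) : ℤ) with hQ1def
  set Q0 : ℤ := (finrank k (𝒜 (d - l)) : ℤ) with hQ0def
  have hfin : Q1 + Na * Q0 ≤ Na * Q1 := by
    have h1 : Na * Q0 ≤ Nb * Q0 := mul_le_mul_of_nonneg_right hcon hq00
    linarith [hmain, hbound1, hbound2, h1]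
  have hQ1 : 2 * Q1 = (D + e + 1) * (D + e + 2) := by
    have := hq2 (d - i0) (by omega)
    have hdi0 : d - i0 = D + e := by omega
    rw [hdi0] at this
    rw [hQ1def, ← hdi0]
    rw [hdi0]
    linarith [this]
  have hQ0e : 2 * Q0 = (D + 1) * (D + 2) := by
    have := hq2 (d - l) (by omega)
    have hdl : d - l = D := by omega
    rw [hdl] at this
    rw [hQ0def, ← hdl, hdl]
    linarith [this]
  have hD1 : 2 * Na * e ≤ D := by nlinarith
  have hD2 : Na * e * (e + 3) ≤ D := by nlinarith
  have hint1 : (2 * Na * e) * D ≤ D * D := mul_le_mul_of_nonneg_right hD1 hD0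
  have hint2 : (0:ℤ) ≤ (e - 1) * (2 * D + e + 3) :=
    mul_nonneg (by omega) (by omega)
  nlinarith [hfin, hQ1, hQ0e, hD0, hint1, hD2, hint2, hNa1, he1]

/-- let `A` be a quantum polynomial ring in three variables
(a connected `ℤ≥0`-graded noetherian domain with `dim_k A_n = (n+1)(n+2)/2`),
and let `M` be a torsion free graded right `A`-module of projective dimension one
with minimal resolution `0 → ⊕_i A(-i)^{b i} →φ ⊕_i A(-i)^{a i} → M → 0`.
The map `φ` is encoded by its matrix `T` whose `(y,x)` entry is homogeneous of
degree `x.1 - y.1` (so that `φ` is graded) and lies in the augmentation ideal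
(minimality).  `M` is the cokernel of `φ`, and torsion freeness is expressed as
`r • m = 0 → r = 0 ∨ m = 0` (no nonzero rank zero submodule, over the domain `A`).
Then `∑_{i ≤ l} b i < ∑_{i < l} a i` whenever `∑_{i < l} a i > 0`; in particular,
with `σ` the lowest index with `a σ ≠ 0`, one has `b i = 0` for `i ≤ σ`. -/
theorem minimal_resolution_betti_inequalities
    (k : Type) [Field k] (A : Type) [Ring A] [Algebra k A]
    [IsDomain A] [IsNoetherianRing A]
    (𝒜 : ℤ → Submodule k A) [GradedRing 𝒜]
    (hneg : ∀ n : ℤ, n < 0 → 𝒜 n = ⊥)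
    (hdim : ∀ n : ℤ, 0 ≤ n → (finrank k (𝒜 n) : ℤ) = (n + 1) * (n + 2) / 2)
    (a b : ℤ → ℕ)
    (hafin : (Function.support a).Finite) (hbfin : (Function.support b).Finite)
    -- the matrix of φ : ⊕_i A(-i)^{b i} → ⊕_i A(-i)^{a i}
    (T : (Σ i : ℤ, Fin (a i)) → (Σ i : ℤ, Fin (b i)) → A)
    (hhom : ∀ y x, T y x ∈ 𝒜 (x.1 - y.1))
    (hmin : ∀ y x, x.1 - y.1 ≤ 0 → T y x = 0)  -- minimality: entries in the augmentation ideal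
    (φ : ((Σ i : ℤ, Fin (b i)) →₀ A) →ₗ[A] ((Σ i : ℤ, Fin (a i)) →₀ A))
    (hφ : ∀ (f : (Σ i : ℤ, Fin (b i)) →₀ A) (y : Σ i : ℤ, Fin (a i)),
      φ f y = ∑ᶠ x : (Σ i : ℤ, Fin (b i)), f x * T y x)
    (hinj : Function.Injective φ)  -- exactness of the resolution
    -- torsion freeness of M = coker φ:
    (htf : ∀ (r : A) (m : ((Σ i : ℤ, Fin (a i)) →₀ A) ⧸ LinearMap.range φ),
      r • m = 0 → r = 0 ∨ m = 0) :
    (∀ l : ℤ, 0 < ∑ᶠ i : ℤ, (if i < l then (a i : ℤ) else 0) →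
      (∑ᶠ i : ℤ, (if i ≤ l then (b i : ℤ) else 0)) <
        ∑ᶠ i : ℤ, (if i < l then (a i : ℤ) else 0)) ∧
    ∀ σ : ℤ, a σ ≠ 0 → (∀ i : ℤ, i < σ → a i = 0) →
      ∀ i : ℤ, i ≤ σ → b i = 0 := by
  classical
  -- `Finsupp.single y0 1` is not in the range of `φ` (minimality)
  have hone_notin : ∀ y0 : (Σ i : ℤ, Fin (a i)),
      Finsupp.single y0 (1:A) ∉ LinearMap.range φ := by
    rintro y0 ⟨f, hf⟩
    have h1 : (1:A) = φ f y0 := by rw [hf, Finsupp.single_eq_same]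
    rw [hφ] at h1
    have hsupp : (Function.support fun x => f x * T y0 x) ⊆ ↑f.support := by
      intro x hx
      simp only [Function.mem_support] at hx
      rw [Finset.mem_coe, Finsupp.mem_support_iff]
      intro h3
      rw [h3, zero_mul] at hx
      exact hx rfl
    rw [finsum_eq_sum_of_support_subset _ hsupp] at h1
    have h2 := congrArg (GradedRing.proj 𝒜 0) h1
    rw [proj_zero_one 𝒜, map_sum] at h2
    have h3 : ∀ x ∈ f.support, GradedRing.proj 𝒜 0 (f x * T y0 x) = 0 := by
      intro x _
      by_cases hd : x.1 - y0.1 ≤ 0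
      · rw [hmin y0 x hd, mul_zero, map_zero]
      · exact proj_zero_mul_of_pos 𝒜 hneg (by omega) (hhom y0 x) (f x)
    rw [Finset.sum_eq_zero h3] at h2
    exact one_ne_zero h2
  -- torsion freeness: single y0 s in range φ forces s = 0
  have hkey : ∀ (y0 : Σ i : ℤ, Fin (a i)) (s : A),
      Finsupp.single y0 s ∈ LinearMap.range φ → s = 0 := by
    intro y0 s hs
    have hm : s • ((LinearMap.range φ).mkQ (Finsupp.single y0 (1:A))) = 0 := by
      rw [← map_smul, Finsupp.smul_single, smul_eq_mul, mul_one, Submodule.mkQ_apply,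
        Submodule.Quotient.mk_eq_zero]
      exact hs
    rcases htf s _ hm with h | h
    · exact h
    · exact absurd ((Submodule.Quotient.mk_eq_zero _).mp (by rwa [Submodule.mkQ_apply] at h))
        (hone_notin y0)
  constructor
  · -- part 1
    intro l hpos
    by_contra hcon
    push_neg at hcon
    -- convert the finsums into finite sums
    have hsuba : Function.support (fun i => if i < l then (a i : ℤ) else 0)
        ⊆ ↑(hafin.toFinset.filter (fun i => i < l)) := by
      intro i hi
      simp only [Function.mem_support] at hi
      have h1 : i < l := by
        by_contra h
        rw [if_neg h] at hi
        exact hi rfl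
      have h2 : a i ≠ 0 := by
        intro h
        rw [if_pos h1, h] at hi
        exact hi rfl
      exact Finset.mem_coe.mpr (Finset.mem_filter.mpr ⟨hafin.mem_toFinset.mpr h2, h1⟩)
    have hsuma : ∑ᶠ i : ℤ, (if i < l then (a i : ℤ) else 0)
        = ∑ i ∈ hafin.toFinset.filter (fun i => i < l), (a i : ℤ) := by
      rw [finsum_eq_sum_of_support_subset _ hsuba]
      exact Finset.sum_congr rfl (fun x hx => if_pos (Finset.mem_filter.mp hx).2)
    have hsubb : Function.support (fun i => if i ≤ l then (b i : ℤ) else 0)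
        ⊆ ↑(hbfin.toFinset.filter (fun i => i ≤ l)) := by
      intro i hi
      simp only [Function.mem_support] at hi
      have h1 : i ≤ l := by
        by_contra h
        rw [if_neg h] at hi
        exact hi rfl
      have h2 : b i ≠ 0 := by
        intro h
        rw [if_pos h1, h] at hi
        exact hi rfl
      exact Finset.mem_coe.mpr (Finset.mem_filter.mpr ⟨hbfin.mem_toFinset.mpr h2, h1⟩)
    have hsumb : ∑ᶠ i : ℤ, (if i ≤ l then (b i : ℤ) else 0)
        = ∑ i ∈ hbfin.toFinset.filter (fun i => i ≤ l), (b i : ℤ) := by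
      rw [finsum_eq_sum_of_support_subset _ hsubb]
      exact Finset.sum_congr rfl (fun x hx => if_pos (Finset.mem_filter.mp hx).2)
    rw [hsuma] at hpos
    rw [hsuma, hsumb] at hcon
    refine part1_aux k A 𝒜 hdim a b T hhom hmin φ hφ hinj hkey l _ _ ?_ ?_ ?_ ?_ hpos hcon
    · intro i hi
      refine ⟨(Finset.mem_filter.mp hi).2, Nat.pos_of_ne_zero ?_⟩
      exact hafin.mem_toFinset.mp (Finset.mem_filter.mp hi).1
    · intro i hil hai
      exact Finset.mem_filter.mpr ⟨hafin.mem_toFinset.mpr hai, hil⟩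
    · intro i hi
      exact (Finset.mem_filter.mp hi).2
    · intro i hil hbi
      exact Finset.mem_filter.mpr ⟨hbfin.mem_toFinset.mpr hbi, hil⟩
  · -- part 2
    intro σ hσ hσmin i hil
    by_contra hbi
    have hb0 : 0 < b i := Nat.pos_of_ne_zero hbi
    have hcol : φ (Finsupp.single ⟨i, ⟨0, hb0⟩⟩ 1) = 0 := by
      apply Finsupp.ext
      intro y
      rw [hφ, Finsupp.coe_zero, Pi.zero_apply]
      have hz : ∀ x' : (Σ i : ℤ, Fin (b i)), x' ≠ ⟨i, ⟨0, hb0⟩⟩ →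
          Finsupp.single (⟨i, ⟨0, hb0⟩⟩ : Σ i : ℤ, Fin (b i)) (1:A) x' * T y x' = 0 := by
        intro x' hx'
        rw [Finsupp.single_eq_of_ne' (Ne.symm hx'), zero_mul]
      rw [finsum_eq_single _ _ hz, Finsupp.single_eq_same, one_mul]
      apply hmin
      have hy : σ ≤ y.1 := by
        by_contra hy
        exact (Fin.pos y.2).ne' (hσmin y.1 (lt_of_not_ge hy))
      show (⟨i, ⟨0, hb0⟩⟩ : Σ i : ℤ, Fin (b i)).1 - y.1 ≤ 0
      simp only
      omega
    have h1 : Finsupp.single (⟨i, ⟨0, hb0⟩⟩ : Σ i : ℤ, Fin (b i)) (1:A) = 0 :=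
      hinj (by rw [hcol, map_zero])
    exact one_ne_zero (Finsupp.single_eq_zero.mp h1)
end

section
/- Let I be a graded module over a quantum polynomial ring A in three variables with Hilbert series h(t) = 1/(1-t)³ - s(t)/(1-t) for a Castelnuovo polynomial s of weight n, and suppose I has projective dimension 1 and Hom-condition Hom_A(I,I) = k. Then dim_k Ext¹_A(I,I) = 1 + n + c, where c is the constant term of (t^{-1} - t^{-2}) s(t^{-1}) s(t). -/
/-- Coefficients of `1/(1-t)³`. -/
def hilb3 : ℤ → ℤ := fun m => if 0 ≤ m then (m + 1) * (m + 2) / 2 else 0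

/-- Coefficients of `1/(1-t)`. -/
def hilb1 : ℤ → ℤ := fun m => if 0 ≤ m then 1 else 0

/-!
By the Euler-form identity in degree `0`, `dim Ext¹(I,I) = 1 - ∑ᵢ qᵢ h_I(i)`, where
`q(t) = 1 - (1-t)² s(t)` is the numerator of `h_I`. Summation by parts moves the second
difference from `s` onto `h_I`, and `Δ² h_I(i) = 1 + s_{i+1} - s_{i+2}` for `i ≥ 0`, since `Δ²`
sends `1/(1-t)³` to `1/(1-t)` and `s(t)/(1-t)` to a first difference of `s`. Hence
`∑ᵢ qᵢ h_I(i) = h_I(0) - n - c = 1 - s₀ - n - c`, and `s₀ = 1` for a nonzero Castelnuovo function.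
-/

open Function
open scoped fwdDiff

section SummationByParts

lemma hasFiniteSupport_ite_eq {α R : Type*} [Zero R] [DecidableEq α] (a : α) (f : α → R) :
    (fun i => if i = a then f i else 0).HasFiniteSupport :=
  (Set.finite_singleton a).subset fun _ hi => by_contra fun h => hi (if_neg h)

variable {M R : Type*} [AddCommGroup M] [Ring R]

lemma Function.HasFiniteSupport.comp_add_right_s14 {s : M → R} (hs : s.HasFiniteSupport) (a : M) :
    (fun x => s (x + a)).HasFiniteSupport :=
  hs.fun_comp_of_injective (add_left_injective a)

lemma Function.HasFiniteSupport.fwdDiff {s : M → R} (hs : s.HasFiniteSupport) (a : M) :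
    (Δ_[a] s).HasFiniteSupport :=
  (hs.comp_add_right_s14 a).fun_sub hs

lemma Function.HasFiniteSupport.fwdDiff_iter {s : M → R} (hs : s.HasFiniteSupport) (a : M)
    (n : ℕ) : (Δ_[a] ^[n] s).HasFiniteSupport := by
  induction n with
  | zero => exact hs
  | succ n ih => rw [iterate_succ_apply']; exact ih.fwdDiff a

theorem finsum_fwdDiff_mul_comp_add {s : M → R} (hs : s.HasFiniteSupport) (a : M) (h : M → R) :
    ∑ᶠ x, Δ_[a] s x * h (x + a) = -∑ᶠ x, s x * Δ_[a] h x := by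
  have hshift : ∑ᶠ x, s (x + a) * h (x + a) = ∑ᶠ x, s x * h x :=
    finsum_comp_equiv (Equiv.addRight a) (f := fun x => s x * h x)
  simp only [fwdDiff, sub_mul, mul_sub]
  rw [finsum_sub_distrib ((hs.comp_add_right_s14 a).fun_mul_left _) (hs.fun_mul_left _), hshift,
    finsum_sub_distrib (hs.fun_mul_left _) (hs.fun_mul_left _), neg_sub]

theorem finsum_fwdDiff_iter_mul_comp_add {s : M → R} (hs : s.HasFiniteSupport) (a : M) (n : ℕ)
    (h : M → R) :
    ∑ᶠ x, Δ_[a] ^[n] s x * h (x + n • a) = (-1) ^ n * ∑ᶠ x, s x * Δ_[a] ^[n] h x := by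
  induction n generalizing s h with
  | zero => simp
  | succ n ih =>
    calc ∑ᶠ x, Δ_[a] ^[n + 1] s x * h (x + (n + 1) • a)
        = ∑ᶠ x, Δ_[a] ^[n] (Δ_[a] s) x * (fun y => h (y + a)) (x + n • a) := by
          simp only [iterate_succ_apply, succ_nsmul, add_assoc]
      _ = (-1) ^ n * ∑ᶠ x, Δ_[a] s x * Δ_[a] ^[n] h (x + a) := by
          rw [ih (hs.fwdDiff a) (fun y => h (y + a))]
          simp only [fwdDiff_iter_comp_add]
      _ = (-1) ^ (n + 1) * ∑ᶠ x, s x * Δ_[a] ^[n + 1] h x := by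
          rw [finsum_fwdDiff_mul_comp_add hs, iterate_succ_apply', pow_succ,
            mul_neg_one, neg_mul, mul_neg]

theorem finsum_fwdDiff_iter_comp_sub_mul {s : M → R} (hs : s.HasFiniteSupport) (a : M) (n : ℕ)
    (h : M → R) :
    ∑ᶠ x, Δ_[a] ^[n] s (x - n • a) * h x = (-1) ^ n * ∑ᶠ x, s x * Δ_[a] ^[n] h x := by
  rw [← finsum_fwdDiff_iter_mul_comp_add hs, ← finsum_comp_equiv (Equiv.addRight (n • a))]
  simp

end SummationByParts

/-- Coefficients of `h_I(t) = 1/(1-t)³ - s(t)/(1-t)`. -/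
noncomputable def hilbFun (s : ℤ → ℤ) (m : ℤ) : ℤ :=
  hilb3 m - ∑ᶠ i, s i * hilb1 (m - i)

/-- Coefficients of `(1-t)³ h_I(t) = 1 - (1-t)² s(t)`. -/
def hilbNumerator (s : ℤ → ℤ) (i : ℤ) : ℤ :=
  (if i = 0 then 1 else 0) - (s i - 2 * s (i - 1) + s (i - 2))

section HilbertFunction

variable {s : ℤ → ℤ}

lemma fwdDiff_hilb3 (m : ℤ) : Δ_[1] hilb3 m = (m + 2) * hilb1 (m + 1) := by
  have key : (m + 1 + 1) * (m + 1 + 2) = (m + 1) * (m + 2) + (m + 2) * 2 := by ring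
  unfold fwdDiff hilb3 hilb1
  rw [key, Int.add_mul_ediv_right _ _ two_ne_zero]
  split_ifs
  · ring
  · obtain rfl : m = -1 := by omega
    norm_num
  · omega
  · ring

lemma fwdDiff_finsum_mul_hilb1_sub (hs : s.HasFiniteSupport) (m : ℤ) :
    Δ_[1] (fun k => ∑ᶠ i, s i * hilb1 (k - i)) m = s (m + 1) := by
  rw [fwdDiff, ← finsum_sub_distrib (hs.fun_mul_left _) (hs.fun_mul_left _)]
  simp_rw [← mul_sub]
  rw [finsum_eq_single _ (m + 1)]
  · simp [hilb1]
  · intro i hi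
    have : hilb1 (m + 1 - i) = hilb1 (m - i) := by
      unfold hilb1
      split_ifs <;> omega
    rw [this, sub_self, mul_zero]

lemma fwdDiff_hilbFun (hs : s.HasFiniteSupport) (m : ℤ) :
    Δ_[1] (hilbFun s) m = (m + 2) * hilb1 (m + 1) - s (m + 1) := by
  rw [← fwdDiff_hilb3, ← fwdDiff_finsum_mul_hilb1_sub hs]
  simp only [fwdDiff, hilbFun]
  ring

lemma fwdDiff_iter_two_hilbFun (hs : s.HasFiniteSupport) {m : ℤ} (hm : -1 ≤ m) :
    Δ_[1] ^[2] (hilbFun s) m = 1 + (s (m + 1) - s (m + 2)) := by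
  have h1 : hilb1 (m + 1) = 1 := if_pos (by omega)
  have h2 : hilb1 (m + 2) = 1 := if_pos (by omega)
  rw [iterate_succ_apply', iterate_one, fwdDiff, fwdDiff_hilbFun hs, fwdDiff_hilbFun hs,
    add_assoc m 1 1, one_add_one_eq_two, h1, h2]
  ring

lemma hilbFun_zero (hneg : ∀ i < 0, s i = 0) : hilbFun s 0 = 1 - s 0 := by
  rw [hilbFun, finsum_eq_single _ 0]
  · simp [hilb1, hilb3]
  · intro i hi
    rcases lt_or_gt_of_ne hi with hi | hi
    · rw [hneg i hi, zero_mul]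
    · rw [hilb1, if_neg (by omega), mul_zero]

lemma finsum_mul_fwdDiff_iter_two_hilbFun (hs : s.HasFiniteSupport)
    (hneg : ∀ i < 0, s i = 0) :
    ∑ᶠ i, s i * Δ_[1] ^[2] (hilbFun s) i =
      ∑ᶠ i, s i + ∑ᶠ i, s i * (s (i + 1) - s (i + 2)) := by
  rw [← finsum_add_distrib hs (hs.fun_mul_left _)]
  refine finsum_congr fun i => ?_
  rcases lt_or_ge i 0 with hi | hi
  · simp [hneg i hi]
  · rw [fwdDiff_iter_two_hilbFun hs (by omega)]
    ring

lemma IsCastelnuovo.apply_zero_eq_one (hs : IsCastelnuovo s) (hs0 : s ≠ 0) :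
    s 0 = 1 := by
  obtain ⟨-, hneg, hpos, σ, hσ, hlin, hσle, hdec⟩ := hs
  rcases hσ.lt_or_eq with hσ | rfl
  · simpa using hlin 0 le_rfl hσ
  · refine absurd (funext fun i => ?_) hs0
    rcases lt_or_ge i 0 with hi | hi
    · exact hneg i hi
    · exact le_antisymm (Int.leInduction (motive := fun j _ => s j ≤ 0) hσle
        (fun j hj ih => (hdec j hj).trans ih) i hi) (hpos i)

lemma hilbNumerator_eq (i : ℤ) :
    hilbNumerator s i = (if i = 0 then 1 else 0) - Δ_[1] ^[2] s (i - 2 • 1) := by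
  simp only [hilbNumerator, iterate_succ_apply', iterate_zero_apply, fwdDiff]
  ring_nf

theorem finsum_hilbNumerator_mul_hilbFun (hs : s.HasFiniteSupport)
    (hneg : ∀ i < 0, s i = 0) :
    ∑ᶠ i, hilbNumerator s i * hilbFun s i =
      1 - s 0 - (∑ᶠ i, s i + ∑ᶠ i, s i * (s (i + 1) - s (i + 2))) := by
  have hΔ : (fun i => Δ_[1] ^[2] s (i - 2 • 1)).HasFiniteSupport :=
    (hs.fwdDiff_iter 1 2).fun_comp_of_injective sub_left_injective
  simp only [hilbNumerator_eq, sub_mul, ite_zero_mul, one_mul]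
  rw [finsum_sub_distrib (hasFiniteSupport_ite_eq _ _) (hΔ.fun_mul_left _),
    finsum_eq_single _ 0 fun i hi => if_neg hi, if_pos rfl, finsum_fwdDiff_iter_comp_sub_mul hs,
    finsum_mul_fwdDiff_iter_two_hilbFun hs hneg, hilbFun_zero hneg]
  norm_num

end HilbertFunction

/-- `e0 m` and `e1 m` are the dimensions of the degree-`m` parts of `Hom_A(I,I)` and
`Ext¹_A(I,I)`; as `Ext²_A(I,I) = 0`, `hEuler` is the `t^m`-coefficient of the Euler-form identity,
written with `q(t) = (1-t)³ h_I(t)`. -/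
theorem dim_ext_one_eq
    (s : ℤ → ℤ) (hs : IsCastelnuovo s)
    (n : ℤ) (hn : n = ∑ᶠ j : ℤ, s j) (hn1 : 1 ≤ n)
    (hI : ℤ → ℤ)
    (hhI : ∀ m : ℤ, hI m = hilb3 m - ∑ᶠ i : ℤ, s i * hilb1 (m - i))
    (q : ℤ → ℤ)
    (hq : ∀ i : ℤ, q i =
      (if i = 0 then 1 else 0) - (s i - 2 * s (i - 1) + s (i - 2)))
    (e0 e1 : ℤ → ℤ)
    (he0 : ∀ m : ℤ, e0 m = if m = 0 then 1 else 0)  -- Hom_A(I,I) = k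
    (hEuler : ∀ m : ℤ, e0 m - e1 m = ∑ᶠ i : ℤ, q i * hI (m + i))
    (c : ℤ) (hc : c = ∑ᶠ j : ℤ, s j * (s (j + 1) - s (j + 2))) :
    e1 0 = 1 + n + c := by
  have hs0 : s 0 = 1 := hs.apply_zero_eq_one (by rintro rfl; simp at hn; omega)
  obtain rfl : hI = hilbFun s := funext hhI
  obtain rfl : q = hilbNumerator s := funext hq
  have heuler := hEuler 0
  rw [he0, if_pos rfl] at heuler
  simp only [zero_add, finsum_hilbNumerator_mul_hilbFun hs.1 hs.2.1] at heuler
  rw [hn, hc]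
  linarith
end

section
/- Let s(t) be a Castelnuovo polynomial of weight n ≥ 1 and c the constant term of (t^{-1}-t^{-2})s(t^{-1})s(t). Then min(n+2, 2n) ≤ 1 + n + c ≤ 2n, with equality on the right iff s(t) = 1 + 2t + ... + (u-1)t^{u-2} + v t^{u-1} for some u > 0, v ≥ 0 (the 'generic' staircase), and equality on the left iff s(t) = 1 + t + t² + ... + t^{n-1}. -/
private lemma cast_tele (f : ℤ → ℤ) (a : ℤ) : ∀ b : ℤ, a - 1 ≤ b →
    ∑ j ∈ Finset.Icc a b, (f j - f (j - 1)) = f b - f (a - 1) := by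
  refine Int.le_induction ?_ ?_
  · rw [Finset.Icc_eq_empty (by omega), Finset.sum_empty, sub_self]
  · intro k hk ih
    rw [show Finset.Icc a (k + 1) = insert (k + 1) (Finset.Icc a k) from by
        ext x; simp only [Finset.mem_insert, Finset.mem_Icc]; omega,
      Finset.sum_insert (by simp only [Finset.mem_Icc]; omega), ih]
    rw [show k + 1 - 1 = k from by ring]
    ring

private lemma cast_dd (x y : ℤ) (h : y ≤ x) : 0 ≤ (x - y) * (x - y - 1) := by
  rcases (show x - y = 0 ∨ 1 ≤ x - y from by omega) with h0 | h0
  · rw [h0]; norm_num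
  · exact mul_nonneg (by omega) (by omega)

/-- for a Castelnuovo polynomial `s` of weight `n ≥ 1`, with `c`
the constant term of `(t⁻¹ - t⁻²) s(t⁻¹) s(t)`, i.e. `c = ∑_j s_j (s_{j-1} - s_{j-2})`,
one has `min (n+2) (2n) ≤ 1 + n + c ≤ 2n`; equality holds on the right iff
`s(t) = 1 + 2t + ⋯ + (u-1)t^{u-2} + v t^{u-1}` for some `u > 0`, `v ≥ 0`, and on
the left iff `s(t) = 1 + t + t² + ⋯ + t^{n-1}`. -/
theorem castelnuovo_dimension_bounds
    (s : ℤ → ℤ) (hs : IsCastelnuovo s)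
    (n : ℤ) (hn : n = ∑ᶠ j : ℤ, s j) (hn1 : 1 ≤ n)
    (c : ℤ) (hc : c = ∑ᶠ j : ℤ, s j * (s (j - 1) - s (j - 2))) :
    min (n + 2) (2 * n) ≤ 1 + n + c ∧ 1 + n + c ≤ 2 * n ∧
    (1 + n + c = 2 * n ↔
      ∃ u v : ℤ, 0 < u ∧ 0 ≤ v ∧
        ∀ j : ℤ, s j =
          if 0 ≤ j ∧ j < u - 1 then j + 1 else if j = u - 1 then v else 0) ∧
    (1 + n + c = min (n + 2) (2 * n) ↔
      ∀ j : ℤ, s j = if 0 ≤ j ∧ j < n then 1 else 0) := by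
  obtain ⟨hfin, hneg, hpos, σ, hσ0, hinc, hσtop, hdec⟩ := hs
  -- monotonicity past σ
  have mono : ∀ i j : ℤ, σ ≤ i → i ≤ j → s j ≤ s i := by
    intro i j hi hij
    refine Int.le_induction (motive := fun j _ => s j ≤ s i) le_rfl ?_ j hij
    intro k hk ih
    exact le_trans (hdec k (hi.trans hk)) ih
  -- σ ≥ 1
  have hσ1 : 1 ≤ σ := by
    by_contra h
    have hσ0' : σ = 0 := by omega
    have hz : ∀ j : ℤ, s j = 0 := by
      intro j
      rcases lt_or_ge j 0 with h' | h'
      · exact hneg j h'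
      · have h1 := mono σ j le_rfl (by omega)
        have h2 := hpos j
        omega
    rw [hn] at hn1
    simp only [hz, finsum_zero] at hn1
    omega
  have s0 : s 0 = 1 := by have := hinc 0 le_rfl (by omega); omega
  have hsm1 : s (σ - 1) = σ := by have := hinc (σ - 1) (by omega) (by omega); omega
  -- a bound N beyond which s vanishes
  obtain ⟨m, hmσ, hm0⟩ : ∃ m : ℤ, σ ≤ m ∧ s m = 0 := by
    by_contra h
    push_neg at h
    have hsub : Set.Ici σ ⊆ Function.support s := fun j hj => h j hj
    exact ((Set.Ici_infinite σ).mono hsub) hfin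
  set N : ℤ := max (σ + 2) m with hNdef
  have hNσ : σ + 2 ≤ N := le_max_left _ _
  have hN : ∀ j : ℤ, N ≤ j → s j = 0 := by
    intro j hj
    have h1 := mono m j hmσ (le_trans (le_max_right _ _) hj)
    have h2 := hpos j
    omega
  -- step facts
  have hstep : ∀ j : ℤ, σ + 1 ≤ j → s (j - 1) ≤ s (j - 2) := by
    intro j hj
    rcases eq_or_lt_of_le hj with h | h
    · rw [show j - 1 = σ from by omega, show j - 2 = σ - 1 from by omega, hsm1]
      exact hσtop
    · exact mono (j - 2) (j - 1) (by omega) (by omega)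
  have hd1 : ∀ j : ℤ, 1 ≤ j → j ≤ σ → s (j - 1) - s (j - 2) = 1 := by
    intro j h1 h2
    rcases eq_or_lt_of_le h1 with h | h
    · rw [show j - 1 = 0 from by omega, show j - 2 = -1 from by omega, s0,
        hneg (-1) (by omega)]
      norm_num
    · rw [hinc (j - 1) (by omega) (by omega), hinc (j - 2) (by omega) (by omega)]
      ring
  have hdle : ∀ j : ℤ, s (j - 1) - s (j - 2) ≤ 1 := by
    intro j
    rcases le_or_gt j 0 with h | h
    · rw [hneg (j - 1) (by omega), hneg (j - 2) (by omega)]; omega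
    · rcases le_or_gt j σ with h' | h'
      · rw [hd1 j (by omega) h']
      · have := hstep j (by omega); omega
  -- sums over finsets
  have hsupp : Function.support s ⊆ (Finset.Icc (0:ℤ) N : Set ℤ) := by
    intro j hj
    simp only [Function.mem_support] at hj
    simp only [Finset.coe_Icc, Set.mem_Icc]
    constructor
    · by_contra h; exact hj (hneg j (by omega))
    · by_contra h; exact hj (hN j (by omega))
  have hsuppc : ∀ M : ℤ, N ≤ M →
      Function.support (fun j => s j * (s (j - 1) - s (j - 2))) ⊆ (Finset.Icc (0:ℤ) M : Set ℤ) := by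
    intro M hM j hj
    simp only [Function.mem_support] at hj
    have hsj : s j ≠ 0 := by intro h; apply hj; rw [h]; ring
    have := hsupp hsj
    simp only [Finset.coe_Icc, Set.mem_Icc] at this ⊢
    omega
  have hnsum : n = ∑ j ∈ Finset.Icc (0:ℤ) N, s j := by
    rw [hn]; exact finsum_eq_sum_of_support_subset s hsupp
  have hcsum : c = ∑ j ∈ Finset.Icc (0:ℤ) N, s j * (s (j - 1) - s (j - 2)) := by
    rw [hc]; exact finsum_eq_sum_of_support_subset _ (hsuppc N le_rfl)
  have hcsum2 : c = ∑ j ∈ Finset.Icc (0:ℤ) (N + 1), s j * (s (j - 1) - s (j - 2)) := by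
    rw [hc]; exact finsum_eq_sum_of_support_subset _ (hsuppc (N + 1) (by omega))
  have hF01 : Finset.Icc (0:ℤ) N = insert 0 (Finset.Icc 1 N) := by
    ext x; simp only [Finset.mem_insert, Finset.mem_Icc]; omega
  have h0mem : (0:ℤ) ∉ Finset.Icc (1:ℤ) N := by simp only [Finset.mem_Icc]; omega
  have hterm0 : s 0 * (s (0 - 1) - s (0 - 2)) = 0 := by
    rw [hneg (0 - 1) (by omega), hneg (0 - 2) (by omega)]; ring
  have hcsum1 : c = ∑ j ∈ Finset.Icc (1:ℤ) N, s j * (s (j - 1) - s (j - 2)) := by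
    rw [hcsum, hF01, Finset.sum_insert h0mem, hterm0, zero_add]
  have hnsum1 : n = 1 + ∑ j ∈ Finset.Icc (1:ℤ) N, s j := by
    rw [hnsum, hF01, Finset.sum_insert h0mem, s0]
  have htermle : ∀ j ∈ Finset.Icc (1:ℤ) N, s j * (s (j - 1) - s (j - 2)) ≤ s j := by
    intro j _
    calc s j * (s (j - 1) - s (j - 2)) ≤ s j * 1 :=
          mul_le_mul_of_nonneg_left (hdle j) (hpos j)
      _ = s j := mul_one _
  have hub : c ≤ n - 1 := by
    have h := Finset.sum_le_sum htermle
    rw [← hcsum1] at h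
    linarith [hnsum1]
  -- equality criterion for the upper bound
  have hEq : c = n - 1 ↔
      ∀ j ∈ Finset.Icc (1:ℤ) N, s j * (s (j - 1) - s (j - 2)) = s j := by
    rw [hcsum1, show n - 1 = ∑ j ∈ Finset.Icc (1:ℤ) N, s j from by linarith [hnsum1]]
    exact Finset.sum_eq_sum_iff_of_le htermle
  -- the right-hand equality characterization
  have hriff : c = n - 1 ↔
      ∃ u v : ℤ, 0 < u ∧ 0 ≤ v ∧
        ∀ j : ℤ, s j =
          if 0 ≤ j ∧ j < u - 1 then j + 1 else if j = u - 1 then v else 0 := by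
    constructor
    · intro h
      refine ⟨σ + 1, s σ, by omega, hpos σ, ?_⟩
      have hterm := hEq.1 h
      intro j
      rcases lt_trichotomy j σ with hj | hj | hj
      · rcases le_or_gt 0 j with h0 | h0
        · rw [if_pos ⟨h0, by omega⟩]; exact hinc j h0 hj
        · rw [if_neg (by omega), if_neg (by omega)]; exact hneg j h0
      · rw [if_neg (by omega), if_pos (by omega), hj]
      · rw [if_neg (by omega), if_neg (by omega)]
        by_contra hsj
        have hjN : j ≤ N := by
          by_contra h'; exact hsj (hN j (by omega))
        have ht := hterm j (Finset.mem_Icc.2 ⟨by omega, hjN⟩)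
        have hd := hstep j (by omega)
        have h1 : 1 ≤ s j := by
          have := hpos j; omega
        have hnp : s j * (s (j - 1) - s (j - 2)) ≤ 0 :=
          mul_nonpos_of_nonneg_of_nonpos (by omega) (by omega)
        linarith
    · rintro ⟨u, v, hu, hv, hf⟩
      apply hEq.2
      intro j hj
      simp only [Finset.mem_Icc] at hj
      rcases eq_or_ne (s j) 0 with h0 | h0
      · rw [h0]; ring
      · have hju : j ≤ u - 1 := by
          by_contra h'
          exact h0 (by rw [hf j, if_neg (by omega), if_neg (by omega)])
        have h1 : s (j - 1) = j := by
          rw [hf (j - 1), if_pos ⟨by omega, by omega⟩]; ring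
        have h2 : s (j - 2) = j - 1 := by
          rcases le_or_gt 2 j with h2 | h2
          · rw [hf (j - 2), if_pos ⟨by omega, by omega⟩]; ring
          · rw [hf (j - 2), if_neg (by omega), if_neg (by omega)]; omega
        rw [h1, h2]
        ring
  -- lower bound: c ≥ σ - 1 + s σ
  have ha : σ - 1 + s σ ≤ c := by
    have hsplit : Finset.Icc (0:ℤ) (N + 1) =
        Finset.Icc 0 σ ∪ Finset.Icc (σ + 1) (N + 1) := by
      ext x; simp only [Finset.mem_union, Finset.mem_Icc]; omega
    have hdisj : Disjoint (Finset.Icc (0:ℤ) σ) (Finset.Icc (σ + 1) (N + 1)) := by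
      rw [Finset.disjoint_left]
      intro x hx hx'
      simp only [Finset.mem_Icc] at hx hx'
      omega
    have h2c : 2 * c = (∑ j ∈ Finset.Icc (0:ℤ) σ, 2 * (s j * (s (j - 1) - s (j - 2))))
        + ∑ j ∈ Finset.Icc (σ + 1) (N + 1), 2 * (s j * (s (j - 1) - s (j - 2))) := by
      rw [← Finset.sum_union hdisj, ← hsplit, ← Finset.mul_sum, ← hcsum2]
    -- head
    have hhead : ∑ j ∈ Finset.Icc (0:ℤ) σ, 2 * (s j * (s (j - 1) - s (j - 2)))
        = σ ^ 2 + σ - 2 + 2 * s σ := by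
      have h1 : Finset.Icc (0:ℤ) σ = insert 0 (insert σ (Finset.Icc 1 (σ - 1))) := by
        ext x
        simp only [Finset.mem_insert, Finset.mem_Icc]
        omega
      rw [h1, Finset.sum_insert (by simp only [Finset.mem_insert, Finset.mem_Icc]; omega),
        Finset.sum_insert (by simp only [Finset.mem_Icc]; omega), hterm0]
      have eσ : 2 * (s σ * (s (σ - 1) - s (σ - 2))) = 2 * s σ := by
        rw [hd1 σ hσ1 le_rfl]; ring
      have emid : ∑ j ∈ Finset.Icc (1:ℤ) (σ - 1), 2 * (s j * (s (j - 1) - s (j - 2)))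
          = σ ^ 2 + σ - 2 := by
        have hcg : ∀ j ∈ Finset.Icc (1:ℤ) (σ - 1),
            2 * (s j * (s (j - 1) - s (j - 2)))
              = (fun x : ℤ => x ^ 2 + 3 * x) j - (fun x : ℤ => x ^ 2 + 3 * x) (j - 1) := by
          intro j hj
          simp only [Finset.mem_Icc] at hj
          rw [hd1 j hj.1 (by omega), hinc j (by omega) (by omega)]
          ring
        rw [Finset.sum_congr rfl hcg, cast_tele (fun x : ℤ => x ^ 2 + 3 * x) 1 (σ - 1) (by omega)]
        ring
      rw [eσ, emid]
      ring
    -- tail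
    have htail : -(σ ^ 2 - σ) ≤
        ∑ j ∈ Finset.Icc (σ + 1) (N + 1), 2 * (s j * (s (j - 1) - s (j - 2))) := by
      have hterm : ∀ j ∈ Finset.Icc (σ + 1) (N + 1),
          (fun x : ℤ => (s (x - 1)) ^ 2 - s (x - 1)) j
            - (fun x : ℤ => (s (x - 1)) ^ 2 - s (x - 1)) (j - 1)
          ≤ 2 * (s j * (s (j - 1) - s (j - 2))) := by
        intro j hj
        simp only [Finset.mem_Icc] at hj
        simp only [show j - 1 - 1 = j - 2 from by ring]
        have h1 : s j ≤ s (j - 1) := mono (j - 1) j (by omega) (by omega)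
        have h2 : s (j - 1) ≤ s (j - 2) := hstep j (by omega)
        have h3 : 0 ≤ s j := hpos j
        have h4 := cast_dd (s (j - 2)) (s (j - 1)) h2
        have h5 : 0 ≤ (s (j - 2) - s (j - 1)) * (s (j - 1) - s j) :=
          mul_nonneg (by omega) (by omega)
        nlinarith
      have htele := cast_tele (fun x : ℤ => (s (x - 1)) ^ 2 - s (x - 1)) (σ + 1) (N + 1) (by omega)
      have hsum := Finset.sum_le_sum hterm
      rw [htele] at hsum
      simp only [add_sub_cancel_right] at hsum
      rw [hN N le_rfl, hsm1] at hsum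
      have : (0:ℤ) ^ 2 - 0 - (σ ^ 2 - σ) = -(σ ^ 2 - σ) := by ring
      linarith [hsum]
    linarith [h2c, hhead, htail]
  -- the σ = 1 case: s is an all-ones row
  have hball : σ = 1 → ∀ j : ℤ, s j = if 0 ≤ j ∧ j < n then 1 else 0 := by
    intro h1
    have hle1 : ∀ j : ℤ, 0 ≤ j → s j ≤ 1 := by
      intro j hj
      rcases eq_or_lt_of_le hj with h | h
      · rw [← h, s0]
      · have h2 := mono σ j le_rfl (by omega)
        omega
    obtain ⟨K, ⟨hK0, hKs⟩, hKmin⟩ :=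
      Int.exists_least_of_bdd (P := fun z : ℤ => 0 ≤ z ∧ s z = 0)
        ⟨0, fun z hz => hz.1⟩ ⟨N, by constructor <;> [omega; exact hN N le_rfl]⟩
    have hK1 : 1 ≤ K := by
      rcases eq_or_lt_of_le hK0 with h | h
      · rw [← h] at hKs; omega
      · omega
    have hKid : ∀ j : ℤ, s j = if 0 ≤ j ∧ j < K then 1 else 0 := by
      intro j
      split_ifs with hcond
      · have hne : s j ≠ 0 := by
          intro h0
          have := hKmin j ⟨hcond.1, h0⟩
          omega
        have := hle1 j hcond.1
        have := hpos j
        omega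
      · rcases le_or_gt 0 j with h | h
        · have hjK : K ≤ j := by omega
          have h2 := mono K j (by omega) hjK
          have h3 := hpos j
          omega
        · exact hneg j h
    have hKN : K ≤ N := hKmin N ⟨by omega, hN N le_rfl⟩
    have hnK : n = K := by
      rw [hnsum]
      have hcg : ∀ j ∈ Finset.Icc (0:ℤ) N, s j
          = if j ∈ Finset.Icc (0:ℤ) (K - 1) then 1 else 0 := by
        intro j _
        rw [hKid j]
        refine if_congr ?_ rfl rfl
        rw [Finset.mem_Icc]
        omega
      rw [Finset.sum_congr rfl hcg, Finset.sum_ite_mem,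
        show Finset.Icc (0:ℤ) N ∩ Finset.Icc (0:ℤ) (K - 1) = Finset.Icc (0:ℤ) (K - 1) from by
          ext x; simp only [Finset.mem_inter, Finset.mem_Icc]; omega,
        Finset.sum_const, Int.card_Icc]
      rw [nsmul_eq_mul, mul_one]
      omega
    intro j
    rw [hnK]
    exact hKid j
  -- computing c for indicator functions
  have hcind : ∀ K : ℤ, 1 ≤ K → (∀ j : ℤ, s j = if 0 ≤ j ∧ j < K then 1 else 0) →
      c = if 2 ≤ K then 1 else 0 := by
    intro K hK hf
    rw [hcsum, Finset.sum_eq_single_of_mem 1 (by rw [Finset.mem_Icc]; omega) ?_]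
    · rw [hf 1, hf (1 - 1), hf (1 - 2)]
      split_ifs <;> omega
    · intro b hb hb1
      rw [Finset.mem_Icc] at hb
      rw [hf b, hf (b - 1), hf (b - 2)]
      split_ifs <;> omega
  -- the (1,2) case
  have hd2 : σ = 2 → s σ = 0 → c = 2 := by
    intro h2 hs2
    have hz2 : ∀ j : ℤ, 2 ≤ j → s j = 0 := by
      intro j hj
      have := mono σ j le_rfl (by omega)
      have := hpos j
      omega
    have hs1 : s 1 = 2 := by
      have := hinc 1 (by omega) (by omega); omega
    rw [hcsum, Finset.sum_eq_single_of_mem 1 (by rw [Finset.mem_Icc]; omega) ?_]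
    · rw [show (1:ℤ) - 1 = 0 from by norm_num, show (1:ℤ) - 2 = -1 from by norm_num,
        s0, hneg (-1) (by omega), hs1]
      norm_num
    · intro b hb hb1
      rw [Finset.mem_Icc] at hb
      rcases le_or_gt 2 b with h | h
      · rw [hz2 b h]; ring
      · rw [show b = 0 from by omega, hterm0]
  -- Assemble everything
  have hlb : min (n + 2) (2 * n) ≤ 1 + n + c := by
    rcases le_or_gt 2 n with h2 | h2
    · have hc1 : 1 ≤ c := by
        rcases eq_or_lt_of_le hσ1 with h | h
        · have hfm := hball h.symm
          have hcv := hcind n hn1 hfm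
          rw [if_pos h2] at hcv
          omega
        · have := hpos σ
          omega
      rw [min_eq_left (by omega)]
      omega
    · rw [min_eq_right (by omega)]
      have := hpos σ
      omega
  refine ⟨hlb, by omega, ?_, ?_⟩
  · rw [show (1 + n + c = 2 * n) ↔ (c = n - 1) from by omega]
    exact hriff
  · rcases le_or_gt 2 n with h2 | h2
    · rw [min_eq_left (by omega)]
      constructor
      · intro h
        have hc1 : c = 1 := by omega
        rcases eq_or_lt_of_le hσ1 with h1 | h1
        · exact hball h1.symm
        · exfalso
          have h2σ : 2 ≤ σ := h1
          rcases eq_or_lt_of_le h2σ with heq | hgt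
          · rcases eq_or_lt_of_le (hpos σ) with hz | hz
            · have := hd2 heq.symm hz.symm
              omega
            · omega
          · have := hpos σ
            omega
      · intro hfm
        have hcv := hcind n hn1 hfm
        rw [if_pos h2] at hcv
        omega
    · have hn1' : n = 1 := by omega
      rw [min_eq_right (by omega)]
      have hσeq : σ = 1 := by
        by_contra hne
        have h2σ : 2 ≤ σ := by omega
        have hs1 : s 1 = 2 := by
          have := hinc 1 (by omega) (by omega); omega
        have hsub : Finset.Icc (0:ℤ) 1 ⊆ Finset.Icc (0:ℤ) N := by
          intro x hx
          rw [Finset.mem_Icc] at hx ⊢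
          omega
        have hle := Finset.sum_le_sum_of_subset_of_nonneg hsub (fun i _ _ => hpos i)
        have hsum01 : ∑ j ∈ Finset.Icc (0:ℤ) 1, s j = 3 := by
          rw [show Finset.Icc (0:ℤ) 1 = {0, 1} from by
              ext x; simp only [Finset.mem_insert, Finset.mem_singleton, Finset.mem_Icc]; omega,
            Finset.sum_insert (by norm_num), Finset.sum_singleton, s0, hs1]
          norm_num
        rw [hsum01, ← hnsum] at hle
        omega
      have hfm := hball hσeq
      constructor
      · intro _
        exact hfm
      · intro _
        have hcv := hcind n hn1 hfm
        rw [if_neg (by omega)] at hcv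
        omega
end
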